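/- arXiv:2106.09147 — 6 statements merged into one kernel-verified Lean document; each statement's English description precedes it below -/
import Mathlib

section
/- For every permutation π of [n], Pin(cyc(π)) = Pin(π) ∪ {n+1}. Moreover, for every P ⊆ [n], the map cyc is a bijection from S_n(P) to the set of cyclic permutations of [n+1] with pinnacle set P ∪ {n+1}. -/
/-! Common definitions: permutations as lists, pinnacle sets, cyclic permutations,
Motzkin/Dyck paths encoded as lists of steps in `{1, 0, -1}`, their weights,
and the various auxiliary quantities from the paper. -/

/-- All permutations of `[n] = {1, …, n}` in one-line notation, as lists. -/
def permsOf (n : ℕ) : List (List ℕ) := (List.range' 1 n).permutations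

/-- The pinnacle set of a permutation given in one-line notation: values `l i`
with `1 ≤ i ≤ length − 2` (0-based) such that `l (i-1) < l i > l (i+1)`. -/
def pinnacleSet (l : List ℕ) : Finset ℕ :=
  ((Finset.Ioo 0 (l.length - 1)).filter
    (fun i => l.getD (i-1) 0 < l.getD i 0 ∧ l.getD (i+1) 0 < l.getD i 0)).image
    (fun i => l.getD i 0)

/-- `|S_n(P)|`: the number of permutations of `[n]` with pinnacle set `P`. -/
def Snp (n : ℕ) (P : Finset ℕ) : ℕ :=
  (permsOf n).countP (fun l => decide (pinnacleSet l = P))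

/-- `q_n(P) = Σ_{Q ⊆ P} 2^{|Q|} |S_n(Q)|`. -/
def qSum (n : ℕ) (P : Finset ℕ) : ℕ :=
  ∑ Q ∈ P.powerset, 2 ^ Q.card * Snp n Q

/-- `s_m(l)`: the number of maximal cyclic runs of entries `≥ m` in the list `l`
seen as a cyclic word (counted by the positions where such a run ends). -/
def segCount (l : List ℕ) (m : ℕ) : ℕ :=
  ((Finset.range l.length).filter
    (fun i => m ≤ l.getD i 0 ∧ l.getD ((i+1) % l.length) 0 < m)).card

/-- The pinnacle set of a cyclic permutation (given by any representative list):
entries whose two cyclic neighbours are both smaller. -/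
def cycPinnacleSet (l : List ℕ) : Finset ℕ :=
  ((Finset.range l.length).filter
    (fun i => l.getD ((i + l.length - 1) % l.length) 0 < l.getD i 0 ∧
              l.getD ((i+1) % l.length) 0 < l.getD i 0)).image (fun i => l.getD i 0)

/-- The Motzkin type of a cyclic permutation of `[n+1]` (a list of length `n+1`):
the lattice path (as a list of steps) through the heights `s_{n+1-i} − 1`. -/
def motzkinType (l : List ℕ) : List ℤ :=
  (List.range (l.length - 2)).map
    (fun i => (segCount l (l.length - 1 - i) : ℤ) - (segCount l (l.length - i) : ℤ))

/-- The Dyck type: the Motzkin type with all horizontal steps removed. -/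
def dyckType (l : List ℕ) : List ℤ := (motzkinType l).filter (fun s => decide (s ≠ 0))

/-- A Motzkin path: steps in `{1, 0, −1}`, partial sums nonnegative, total sum `0`. -/
abbrev IsMotzkinPath (M : List ℤ) : Prop :=
  (∀ s ∈ M, s = 1 ∨ s = 0 ∨ s = -1) ∧
  (∀ i ∈ List.range (M.length + 1), 0 ≤ (M.take i).sum) ∧ M.sum = 0

/-- A Dyck path: steps in `{1, −1}`, partial sums nonnegative, total sum `0`. -/
abbrev IsDyckPath (D : List ℤ) : Prop :=
  (∀ s ∈ D, s = 1 ∨ s = -1) ∧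
  (∀ i ∈ List.range (D.length + 1), 0 ≤ (D.take i).sum) ∧ D.sum = 0

/-- A Dyck meander: steps in `{1, −1}`, partial sums nonnegative. -/
abbrev IsMeander (M : List ℤ) : Prop :=
  (∀ s ∈ M, s = 1 ∨ s = -1) ∧ (∀ i ∈ List.range (M.length + 1), 0 ≤ (M.take i).sum)

/-- Weight of a single step of a Motzkin path starting at height `h`:
`1` for an up step, `2(h+1)` for a horizontal step, `h(h+1)` for a down step. -/
def stepWeight (h s : ℤ) : ℤ := if s = 1 then 1 else if s = 0 then 2*(h+1) else h*(h+1)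

/-- The weight `w_M(M)` of a Motzkin path. -/
def motzkinWeight (M : List ℤ) : ℤ :=
  ∏ i ∈ Finset.range M.length, stepWeight ((M.take i).sum) (M.getD i 0)

/-- All lists of length `m` over `{1, 0, −1}`, each exactly once. -/
def stepLists : ℕ → List (List ℤ)
  | 0 => [[]]
  | m+1 => ((stepLists m).map (List.cons 1)) ++ ((stepLists m).map (List.cons 0)) ++
      ((stepLists m).map (List.cons (-1)))

/-- The (0-based) positions of the up steps of a path. -/
def upPositions (D : List ℤ) : List ℕ :=
  (List.range D.length).filter (fun j => decide (D.getD j 0 = 1))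

/-- 0-based index of the `i`-th (1-based) up step of `D`. -/
def upIdx (D : List ℤ) (i : ℕ) : ℕ := (upPositions D).getD (i-1) 0

/-- The starting height of the `i`-th (1-based) up step of `D`. -/
def upStart (D : List ℤ) (i : ℕ) : ℤ := (D.take (upIdx D i)).sum

/-- `d_i` for a Dyck path `D` with `k` up steps: `d_0 = 0`; for `1 ≤ i ≤ k−1` the
number of down steps between the `i`-th and `(i+1)`-st up steps; `d_k` the number of
down steps at the end of `D`. -/
def dOf (D : List ℤ) (k i : ℕ) : ℕ :=
  if i = 0 then 0
  else if i < k then upIdx D (i+1) - upIdx D i - 1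
  else D.length - 1 - upIdx D k

/-- `ℓ_i`: the height of the top of the `i`-th up step of `D`, with `ℓ_0 = 0`. -/
def lOf (D : List ℤ) (i : ℕ) : ℤ := if i = 0 then 0 else upStart D i + 1

/-- `p_i`: the `i`-th largest element of `P`, with the conventions `p_0 = n+1`
and `p_i = 1` for `i > |P|`. -/
def pElem (n : ℕ) (P : Finset ℕ) (i : ℕ) : ℕ :=
  if i = 0 then n + 1
  else if i ≤ P.card then (P.sort (· ≤ ·)).getD (P.card - i) 0
  else 1

/-- The gap sequence `g_i = p_i − p_{i+1} − 1` of `(n, P)`. -/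
def gap (n : ℕ) (P : Finset ℕ) (i : ℕ) : ℤ :=
  (pElem n P i : ℤ) - pElem n P (i+1) - 1

/-- The complete homogeneous symmetric polynomial `h_m(x_1, …, x_k)` (over `ℤ`). -/
def hpoly (m k : ℕ) (x : Fin k → ℤ) : ℤ :=
  ∑ c ∈ Finset.Nat.antidiagonalTuple k m, ∏ i, x i ^ c i

/-- `f(d, ℓ, g) = 0` if `d > g`, and otherwise
`([ℓ=0] + ℓ(ℓ+1)) · h_{g−d}(ℓ+1, ℓ, …, ℓ−d+1)`. -/
def fwt (d : ℕ) (ℓ g : ℤ) : ℤ :=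
  if g < (d : ℤ) then 0
  else ((if ℓ = 0 then 1 else 0) + ℓ * (ℓ + 1)) *
    hpoly (g - d).toNat (d + 1) (fun i => ℓ + 1 - (i.val : ℤ))

/-- The weight `w_D(n, P, D) = ∏_{i=0}^{k} f(d_i, ℓ_i, g_i)` of a Dyck path `D`
of length `2k` relative to `(n, P)` with `k = |P|`. -/
def wD (n : ℕ) (P : Finset ℕ) (D : List ℤ) : ℤ :=
  ∏ i ∈ Finset.range (P.card + 1), fwt (dOf D P.card i) (lOf D i) (gap n P i)

/-- The weight `w_R(r) = ∏_{m=0}^{k} (r_m + 1)^{p_m − p_{m+1}}` of a sequence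
`r ∈ R_k`, where `r` is encoded by its list `M` of `±1` steps (so that
`r_m` is the `m`-th partial sum of `M`). -/
def wR (n : ℕ) (P : Finset ℕ) (M : List ℤ) : ℤ :=
  ∏ m ∈ Finset.range (M.length + 1),
    ((M.take m).sum + 1) ^ (pElem n P m - pElem n P (m+1))

/-- The list `[p_{σ(1)}, …, p_{σ(k)}]` associated with an ordering `σ` of `[k]`
(given as a list `s`). -/
def orderList (n : ℕ) (P : Finset ℕ) (s : List ℕ) : List ℕ := s.map (pElem n P)

/-- `σ` (as a list `s`, a permutation of `[k]`) is an admissible pinnacle ordering of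
`P ⊆ [n]`: some permutation of `[n]` with pinnacle set `P` has its pinnacles appearing
in the order `p_{σ(1)}, …, p_{σ(k)}`. -/
abbrev IsAdmissibleOrdering (n : ℕ) (P : Finset ℕ) (s : List ℕ) : Prop :=
  ∃ l ∈ permsOf n, pinnacleSet l = P ∧
    l.filter (fun v => decide (v ∈ P)) = orderList n P s

/-- `|O(P)|`: the number of admissible pinnacle orderings of `P`. -/
def countO (n : ℕ) (P : Finset ℕ) : ℕ :=
  (permsOf P.card).countP (fun s => decide (IsAdmissibleOrdering n P s))

/-- The starting heights `ℓ_i` of the up steps of the maximal Dyck type `D_P`: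
`ℓ_1 = 0` and `ℓ_i = min(ℓ_{i−1} + 1, p_i − 3 − 2(k−i))` for `2 ≤ i ≤ k`. -/
def lmax (n : ℕ) (P : Finset ℕ) : ℕ → ℤ
  | 0 => 0
  | 1 => 0
  | (i+2) => min (lmax n P (i+1) + 1)
      ((pElem n P (i+2) : ℤ) - 3 - 2 * ((P.card : ℤ) - (i+2)))

/-- A Motzkin path `M` of length `k−1` is compatible with the maximal Dyck type of `P`:
for `1 ≤ i ≤ k−1` the starting height of the `i`-th step of `M` does not exceed
the starting height `ℓ_i` of the `i`-th up step of `D_P`. -/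
abbrev CompatibleMax (n : ℕ) (P : Finset ℕ) (M : List ℤ) : Prop :=
  ∀ i ∈ Finset.Icc 1 (P.card - 1), (M.take (i-1)).sum ≤ lmax n P i

theorem mem_of_mem_pinnacleSet {l : List ℕ} {x : ℕ} (hx : x ∈ pinnacleSet l) : x ∈ l := by
  obtain ⟨i, hi, rfl⟩ := Finset.mem_image.mp hx
  have hi : i < l.length := by simp only [Finset.mem_filter, Finset.mem_Ioo] at hi; omega
  exact List.getD_eq_getElem l 0 hi ▸ List.getElem_mem hi

theorem List.getD_lt_of_forall_lt {l : List ℕ} {m : ℕ} (hl : l ≠ []) (h : ∀ x ∈ l, x < m)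
    (i : ℕ) : l.getD i 0 < m := by
  by_cases hi : i < l.length
  · exact getD_eq_getElem l 0 hi ▸ h _ (getElem_mem hi)
  · obtain ⟨x, hx⟩ := exists_mem_of_ne_nil l hl
    rw [getD_eq_default l 0 (by omega)]
    exact (Nat.zero_le x).trans_lt (h x hx)

theorem cyclic_pred_of_pos {i N : ℕ} (h0 : 0 < i) (hi : i < N) : (i + N - 1) % N = i - 1 := by
  rw [show i + N - 1 = i - 1 + N by omega, Nat.add_mod_right, Nat.mod_eq_of_lt (by omega)]

section CyclicCompletion

variable {l : List ℕ} {m : ℕ}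

/-- The first and last positions of `l` are never cyclic pinnacles of `l ++ [m]`, being adjacent
to the maximum `m`; elsewhere the cyclic and linear conditions agree. -/
theorem cyclicPinnaclePositions_append (hl : l ≠ []) (h : ∀ x ∈ l, x < m) :
    (Finset.range (l ++ [m]).length).filter
      (fun i => (l ++ [m]).getD ((i + (l ++ [m]).length - 1) % (l ++ [m]).length) 0
          < (l ++ [m]).getD i 0 ∧
        (l ++ [m]).getD ((i + 1) % (l ++ [m]).length) 0 < (l ++ [m]).getD i 0) =
      insert l.length ((Finset.Ioo 0 (l.length - 1)).filter
        (fun i => l.getD (i - 1) 0 < l.getD i 0 ∧ l.getD (i + 1) 0 < l.getD i 0)) := by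
  set k := l.length with hk
  have hpos : 0 < k := List.length_pos_iff.mpr hl
  have hget : ∀ i < k, (l ++ [m]).getD i 0 = l.getD i 0 := fun i hi =>
    List.getD_append _ _ _ _ hi
  have hlast : (l ++ [m]).getD k 0 = m := by
    rw [List.getD_append_right _ _ _ _ le_rfl]; simp
  have hlt := List.getD_lt_of_forall_lt hl h
  ext i
  simp only [Finset.mem_filter, Finset.mem_range, Finset.mem_insert, Finset.mem_Ioo,
    List.length_append, List.length_singleton, ← hk]
  rcases Nat.lt_or_ge i k with hik | hik
  · rw [hget i hik, or_iff_right (by omega)]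
    rcases Nat.eq_zero_or_pos i with rfl | hi0
    · rw [Nat.zero_add, Nat.add_sub_cancel, Nat.mod_eq_of_lt k.lt_succ_self, hlast]
      have := hlt 0
      omega
    rw [cyclic_pred_of_pos hi0 (by omega), hget (i - 1) (by omega),
      Nat.mod_eq_of_lt (by omega : i + 1 < k + 1)]
    rcases Nat.lt_or_ge i (k - 1) with hik' | hik'
    · rw [hget (i + 1) (by omega)]
      omega
    · rw [(by omega : i + 1 = k), hlast]
      have := hlt i
      omega
  · obtain rfl | hik := Nat.eq_or_lt_of_le hik
    · rw [cyclic_pred_of_pos hpos (by omega), Nat.mod_self, hlast, hget _ (by omega),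
        hget 0 hpos]
      have := hlt 0
      have := hlt (k - 1)
      omega
    · omega

theorem cycPinnacleSet_append_of_forall_lt (hl : l ≠ []) (h : ∀ x ∈ l, x < m) :
    cycPinnacleSet (l ++ [m]) = insert m (pinnacleSet l) := by
  rw [cycPinnacleSet, cyclicPinnaclePositions_append hl h, Finset.image_insert,
    List.getD_append_right _ _ _ _ le_rfl, pinnacleSet]
  simp only [Nat.sub_self, List.getD_cons_zero]
  congr 1
  refine Finset.image_congr fun i hi => List.getD_append _ _ _ _ ?_
  simp only [Finset.coe_filter, Finset.mem_Ioo, Set.mem_ofPred_eq] at hi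
  omega

end CyclicCompletion

theorem perm_range'_one_append_iff {l : List ℕ} {n : ℕ} :
    (l ++ [n + 1]).Perm (List.range' 1 (n + 1)) ↔ l.Perm (List.range' 1 n) := by
  rw [List.range'_1_concat, Nat.add_comm 1 n, List.perm_append_right_iff]

/-- Lemma `cyc`: `Pin(cyc(π)) = Pin(π) ∪ {n+1}`, and `cyc` is a
bijection from `S_n(P)` onto the cyclic permutations of `[n+1]` (represented by their
one-line notation ending with `n+1`) with pinnacle set `P ∪ {n+1}`. -/
theorem statement4 (n : ℕ) (hn : 1 ≤ n) (P : Finset ℕ) (hP : P ⊆ Finset.Icc 1 n) :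
    (∀ l : List ℕ, l.Perm (List.range' 1 n) →
      cycPinnacleSet (l ++ [n+1]) = insert (n+1) (pinnacleSet l)) ∧
    Set.BijOn (fun l => l ++ [n+1])
      {l : List ℕ | l.Perm (List.range' 1 n) ∧ pinnacleSet l = P}
      {m : List ℕ | m.Perm (List.range' 1 (n+1)) ∧ m.getLast? = some (n+1) ∧
        cycPinnacleSet m = insert (n+1) P} := by
  have hlt : ∀ l : List ℕ, l.Perm (List.range' 1 n) → ∀ x ∈ l, x < n + 1 := fun l hl x hx => by
    have := List.mem_range'_1.mp (hl.mem_iff.mp hx)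
    omega
  have hcyc : ∀ l : List ℕ, l.Perm (List.range' 1 n) →
      cycPinnacleSet (l ++ [n+1]) = insert (n+1) (pinnacleSet l) := fun l hl =>
    cycPinnacleSet_append_of_forall_lt
      (List.ne_nil_of_length_pos (by rw [hl.length_eq, List.length_range']; omega)) (hlt l hl)
  refine ⟨hcyc, fun l ⟨hl, hpin⟩ => ⟨perm_range'_one_append_iff.mpr hl, by simp, by
    rw [hcyc l hl, hpin]⟩, fun _ _ _ _ h => List.append_cancel_right h, ?_⟩
  rintro _ ⟨hm, hlast, hpin⟩
  obtain ⟨l, rfl⟩ := List.getLast?_eq_some_iff.mp hlast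
  have hl := perm_range'_one_append_iff.mp hm
  have hnl : n + 1 ∉ pinnacleSet l := fun h => (hlt l hl _ (mem_of_mem_pinnacleSet h)).false
  have hnP : n + 1 ∉ P := fun h => by have := Finset.mem_Icc.mp (hP h); omega
  refine ⟨l, ⟨hl, ?_⟩, rfl⟩
  rw [← Finset.erase_insert hnl, ← hcyc l hl, hpin, Finset.erase_insert hnP]
end

section
/- For every cyclic permutation σ of [n+1], the Motzkin type M(σ) is a Motzkin path of length n−1. Furthermore, for 1 ≤ i ≤ n−1, the i-th step of M(σ) is an up step if and only if n+1−i is a pinnacle of σ. -/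
/-! Lowering the threshold from `m + 1` to `m` changes the runs only around the position of
`m`: it adds a run ending at `m` exactly when its right neighbour is smaller, and it merges
into `m` a run ending at its left neighbour exactly when that neighbour is larger. Hence
`s_m − s_{m+1} = [right neighbour < m] − [left neighbour > m]`, so every step of `M(σ)` is
`±1` or `0`, and it is `+1` exactly when `m` is a pinnacle. The steps telescope: the height
after `i` steps is `s_{n+1−i} − s_{n+1} = s_{n+1−i} − 1`, which is nonnegative because a
cyclic word containing both `1` and `n + 1` has a run of entries `≥ m` for `2 ≤ m ≤ n + 1`,
and the path ends at height `s_2 − 1 = 0`. The boundary values `s_{n+1} = s_2 = 1` come from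
the same difference formula, since `s_{n+2} = s_1 = 0`. -/

namespace CyclicRuns

section Indices

variable {L i j : ℕ}

lemma succ_mod_eq (hi : i < L) : (i + 1) % L = if i + 1 = L then 0 else i + 1 := by
  split_ifs with h
  · rw [h, Nat.mod_self]
  · exact Nat.mod_eq_of_lt (by omega)

lemma add_sub_one_mod_eq (hj : j < L) : (j + L - 1) % L = if j = 0 then L - 1 else j - 1 := by
  split_ifs with h
  · subst h
    rw [Nat.zero_add]
    exact Nat.mod_eq_of_lt (by omega)
  · rw [show j + L - 1 = j - 1 + L by omega, Nat.add_mod_right, Nat.mod_eq_of_lt (by omega)]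

lemma succ_mod_eq_iff (hi : i < L) (hj : j < L) :
    (i + 1) % L = j ↔ i = (j + L - 1) % L := by
  rw [succ_mod_eq hi, add_sub_one_mod_eq hj]
  split_ifs <;> omega

lemma add_sub_one_mod_ne_self (hL : 2 ≤ L) (hj : j < L) : (j + L - 1) % L ≠ j := by
  rw [add_sub_one_mod_eq hj]
  split_ifs <;> omega

lemma succ_mod_ne_self (hL : 2 ≤ L) (hi : i < L) : (i + 1) % L ≠ i := by
  rw [succ_mod_eq hi]
  split_ifs <;> omega

lemma exists_succ_mod_transition {p : ℕ → Prop} (hi : i < L) (hj : j < L) (hpi : p i)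
    (hpj : ¬ p j) : ∃ t < L, p t ∧ ¬ p ((t + 1) % L) := by
  by_contra! hclosed
  have hall : ∀ t, p ((i + t) % L) := by
    intro t
    induction t with
    | zero => rwa [Nat.add_zero, Nat.mod_eq_of_lt hi]
    | succ t ih =>
      have := hclosed _ (Nat.mod_lt _ (by omega)) ih
      rwa [Nat.mod_add_mod, Nat.add_assoc] at this
  have := hall (j + L - i)
  rw [show i + (j + L - i) = j + L by omega, Nat.add_mod_right, Nat.mod_eq_of_lt hj] at this
  exact hpj this

end Indices

variable {l : List ℕ} {m i j : ℕ}

def cycNext (l : List ℕ) (i : ℕ) : ℕ := l.getD ((i + 1) % l.length) 0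

def cycPrev (l : List ℕ) (i : ℕ) : ℕ := l.getD ((i + l.length - 1) % l.length) 0

lemma getD_mem (hi : i < l.length) : l.getD i 0 ∈ l := by
  rw [List.getD_eq_getElem _ _ hi]
  exact List.getElem_mem hi

lemma cycNext_mem (hi : i < l.length) : cycNext l i ∈ l :=
  getD_mem (Nat.mod_lt _ (by omega))

lemma _root_.List.Nodup.getD_eq_getD_iff (hl : l.Nodup) (hi : i < l.length)
    (hj : j < l.length) :
    l.getD i 0 = l.getD j 0 ↔ i = j := by
  rw [List.getD_eq_getElem _ _ hi, List.getD_eq_getElem _ _ hj]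
  exact hl.getElem_inj_iff

lemma segCount_eq_sum (l : List ℕ) (m : ℕ) :
    (segCount l m : ℤ) =
      ∑ i ∈ Finset.range l.length, if m ≤ l.getD i 0 ∧ cycNext l i < m then 1 else 0 := by
  rw [segCount, Finset.card_filter, Nat.cast_sum]
  push_cast
  rfl

lemma segCount_eq_zero_of_forall_le (h : ∀ x ∈ l, m ≤ x) : segCount l m = 0 := by
  simp only [segCount, Finset.card_eq_zero, Finset.filter_eq_empty_iff, Finset.mem_range]
  exact fun i hi ⟨_, hnext⟩ => (h _ (cycNext_mem hi)).not_gt hnext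

lemma segCount_eq_zero_of_forall_lt (h : ∀ x ∈ l, x < m) : segCount l m = 0 := by
  simp only [segCount, Finset.card_eq_zero, Finset.filter_eq_empty_iff, Finset.mem_range]
  exact fun i hi ⟨hle, _⟩ => (h _ (getD_mem hi)).not_ge hle

/-- The contribution of one cyclic position `(a, b)` to `s_m − s_{m+1}`. -/
lemma indicator_run_end_sub (a b m : ℕ) :
    ((if m ≤ a ∧ b < m then 1 else 0) - (if m + 1 ≤ a ∧ b < m + 1 then 1 else 0) : ℤ) =
      (if a = m ∧ b < m then 1 else 0) - (if b = m ∧ m < a then 1 else 0) := by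
  split_ifs <;> omega

lemma segCount_sub_segCount_succ (hl : l.Nodup) (hj : j < l.length) (hm : l.getD j 0 = m) :
    (segCount l m : ℤ) - segCount l (m + 1) =
      (if cycNext l j < m then 1 else 0) - (if m < cycPrev l j then 1 else 0) := by
  have hprev : (j + l.length - 1) % l.length < l.length := Nat.mod_lt _ (by omega)
  rw [segCount_eq_sum, segCount_eq_sum, ← Finset.sum_sub_distrib]
  simp only [indicator_run_end_sub, Finset.sum_sub_distrib]
  congr 1
  · rw [Finset.sum_eq_single_of_mem j (Finset.mem_range.mpr hj)]
    · simp only [hm, true_and]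
    · intro i hi hij
      refine if_neg fun h => hij ?_
      rw [← hl.getD_eq_getD_iff (Finset.mem_range.mp hi) hj, hm]
      exact h.1
  · rw [Finset.sum_eq_single_of_mem _ (Finset.mem_range.mpr hprev)]
    · have hnext : cycNext l ((j + l.length - 1) % l.length) = m := by
        rw [cycNext, (succ_mod_eq_iff hprev hj).mpr rfl, hm]
      simp only [hnext, true_and]
      rfl
    · intro i hi hij
      have hi := Finset.mem_range.mp hi
      refine if_neg fun h => hij ?_
      rw [← succ_mod_eq_iff hi hj, ← hl.getD_eq_getD_iff (Nat.mod_lt _ (by omega)) hj, hm]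
      exact h.1

lemma mem_cycPinnacleSet_iff (hl : l.Nodup) (hj : j < l.length) :
    l.getD j 0 ∈ cycPinnacleSet l ↔ cycPrev l j < l.getD j 0 ∧ cycNext l j < l.getD j 0 := by
  simp only [cycPinnacleSet, Finset.mem_image, Finset.mem_filter, Finset.mem_range]
  constructor
  · rintro ⟨i, ⟨hi, hlt⟩, hij⟩
    obtain rfl := (hl.getD_eq_getD_iff hi hj).mp hij
    exact hlt
  · exact fun h => ⟨j, ⟨hj, h⟩, rfl⟩

lemma segCount_pos (hi : i < l.length) (hj : j < l.length) (hmi : m ≤ l.getD i 0)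
    (hmj : l.getD j 0 < m) : 0 < segCount l m := by
  obtain ⟨t, ht, hmt, hnext⟩ :=
    exists_succ_mod_transition (p := fun k => m ≤ l.getD k 0) hi hj hmi (not_le.mpr hmj)
  exact Finset.card_pos.mpr
    ⟨t, Finset.mem_filter.mpr ⟨Finset.mem_range.mpr ht, hmt, not_le.mp hnext⟩⟩

lemma cycNext_ne (hl : l.Nodup) (hL : 2 ≤ l.length) (hj : j < l.length) :
    cycNext l j ≠ l.getD j 0 := fun h =>
  succ_mod_ne_self hL hj ((hl.getD_eq_getD_iff (Nat.mod_lt _ (by omega)) hj).mp h)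

lemma cycPrev_ne (hl : l.Nodup) (hL : 2 ≤ l.length) (hj : j < l.length) :
    cycPrev l j ≠ l.getD j 0 := fun h =>
  add_sub_one_mod_ne_self hL hj ((hl.getD_eq_getD_iff (Nat.mod_lt _ (by omega)) hj).mp h)

lemma length_motzkinType (l : List ℕ) : (motzkinType l).length = l.length - 2 := by
  simp [motzkinType]

lemma motzkinType_getD (hi : i < l.length - 2) :
    (motzkinType l).getD i 0 =
      (segCount l (l.length - 1 - i) : ℤ) - segCount l (l.length - i) := by
  simp [motzkinType, List.getD_eq_getElem?_getD, hi]

lemma sum_take_motzkinType (hi : i ≤ l.length - 2) :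
    ((motzkinType l).take i).sum = (segCount l (l.length - i) : ℤ) - segCount l l.length := by
  induction i with
  | zero => simp
  | succ i ih =>
    have hlt : i < (motzkinType l).length := by rw [length_motzkinType]; omega
    rw [List.sum_take_succ _ _ hlt, ih (by omega), ← List.getD_eq_getElem _ 0 hlt,
      motzkinType_getD (by omega), show l.length - 1 - i = l.length - (i + 1) by omega]
    ring

end CyclicRuns

namespace CyclicPerm

open CyclicRuns

variable {n m : ℕ} {σ : List ℕ}

lemma length_eq (hσ : σ.Perm (List.range' 1 (n + 1))) : σ.length = n + 1 := by
  rw [hσ.length_eq, List.length_range']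

lemma nodup (hσ : σ.Perm (List.range' 1 (n + 1))) : σ.Nodup :=
  hσ.nodup_iff.mpr List.nodup_range'

lemma mem_iff (hσ : σ.Perm (List.range' 1 (n + 1))) : m ∈ σ ↔ 1 ≤ m ∧ m ≤ n + 1 := by
  rw [hσ.mem_iff, List.mem_range'_1]
  omega

lemma exists_getD_eq (hσ : σ.Perm (List.range' 1 (n + 1))) (h1 : 1 ≤ m) (h2 : m ≤ n + 1) :
    ∃ j < σ.length, σ.getD j 0 = m := by
  obtain ⟨j, hj, hjm⟩ := List.getElem_of_mem ((mem_iff hσ).mpr ⟨h1, h2⟩)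
  exact ⟨j, hj, by rw [List.getD_eq_getElem _ _ hj, hjm]⟩

lemma segCount_top (hσ : σ.Perm (List.range' 1 (n + 1))) (hn : 1 ≤ n) :
    segCount σ (n + 1) = 1 := by
  have hL := length_eq hσ
  obtain ⟨j, hj, hjm⟩ := exists_getD_eq hσ (by omega) le_rfl
  have hdiff := segCount_sub_segCount_succ (nodup hσ) hj hjm
  have hnext := cycNext_ne (nodup hσ) (by omega) hj
  have hnext_le := ((mem_iff hσ).mp (cycNext_mem hj)).2
  have hprev_le := ((mem_iff hσ).mp (getD_mem (Nat.mod_lt (j + σ.length - 1) (by omega)))).2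
  have hzero : segCount σ (n + 1 + 1) = 0 :=
    segCount_eq_zero_of_forall_lt fun x hx => by have := (mem_iff hσ).mp hx; omega
  rw [hzero] at hdiff
  simp only [cycPrev] at hdiff
  split_ifs at hdiff <;> omega

lemma segCount_two (hσ : σ.Perm (List.range' 1 (n + 1))) (hn : 1 ≤ n) : segCount σ 2 = 1 := by
  have hL := length_eq hσ
  obtain ⟨j, hj, hjm⟩ := exists_getD_eq hσ le_rfl (by omega)
  have hdiff := segCount_sub_segCount_succ (nodup hσ) hj hjm
  have hprev := cycPrev_ne (nodup hσ) (by omega) hj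
  have hprev_ge := ((mem_iff hσ).mp (getD_mem (Nat.mod_lt (j + σ.length - 1) (by omega)))).1
  have hnext_ge := ((mem_iff hσ).mp (cycNext_mem hj)).1
  rw [segCount_eq_zero_of_forall_le fun x hx => ((mem_iff hσ).mp hx).1] at hdiff
  simp only [cycPrev, Nat.reduceAdd] at hdiff hprev
  split_ifs at hdiff <;> omega

lemma one_le_segCount (hσ : σ.Perm (List.range' 1 (n + 1))) (h2 : 2 ≤ m) (hm : m ≤ n + 1) :
    1 ≤ segCount σ m := by
  obtain ⟨i, hi, him⟩ := exists_getD_eq hσ (m := n + 1) (by omega) le_rfl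
  obtain ⟨j, hj, hjm⟩ := exists_getD_eq hσ le_rfl (by omega)
  exact segCount_pos hi hj (him ▸ hm) (hjm ▸ h2)

lemma sum_take_motzkinType_eq (hσ : σ.Perm (List.range' 1 (n + 1))) {i : ℕ} (hi : i < n) :
    ((motzkinType σ).take i).sum = (segCount σ (n + 1 - i) : ℤ) - 1 := by
  have hL := length_eq hσ
  rw [sum_take_motzkinType (by omega), hL, segCount_top hσ (by omega), Nat.cast_one]

lemma motzkinType_getD_sub (hσ : σ.Perm (List.range' 1 (n + 1))) {j : ℕ} (hj : j < σ.length)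
    (hjm : σ.getD j 0 = m) (h2 : 2 ≤ m) (hm : m ≤ n) :
    (motzkinType σ).getD (n - m) 0 =
      (if cycNext σ j < m then 1 else 0) - (if m < cycPrev σ j then 1 else 0) := by
  have hL := length_eq hσ
  rw [motzkinType_getD (by omega), hL, show n + 1 - 1 - (n - m) = m by omega,
    show n + 1 - (n - m) = m + 1 by omega]
  exact segCount_sub_segCount_succ (nodup hσ) hj hjm

lemma motzkinType_getD_mem (hσ : σ.Perm (List.range' 1 (n + 1))) {k : ℕ} (hk : k < n - 1) :
    (motzkinType σ).getD k 0 = 1 ∨ (motzkinType σ).getD k 0 = 0 ∨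
      (motzkinType σ).getD k 0 = -1 := by
  obtain ⟨j, hj, hjm⟩ := exists_getD_eq hσ (m := n - k) (by omega) (by omega)
  rw [show k = n - (n - k) by omega, motzkinType_getD_sub hσ hj hjm (by omega) (by omega)]
  split_ifs <;> simp

lemma motzkinType_getD_eq_one_iff (hσ : σ.Perm (List.range' 1 (n + 1))) (h2 : 2 ≤ m)
    (hm : m ≤ n) : (motzkinType σ).getD (n - m) 0 = 1 ↔ m ∈ cycPinnacleSet σ := by
  have hL := length_eq hσ
  obtain ⟨j, hj, hjm⟩ := exists_getD_eq hσ (m := m) (by omega) (by omega)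
  have hprev := cycPrev_ne (nodup hσ) (by omega) hj
  rw [motzkinType_getD_sub hσ hj hjm h2 hm, ← hjm, mem_cycPinnacleSet_iff (nodup hσ) hj]
  rw [hjm] at hprev ⊢
  split_ifs <;> omega

end CyclicPerm

/-- Lemma `motzkin-type`: the Motzkin type of a cyclic permutation
of `[n+1]` is a Motzkin path of length `n−1`, and its `i`-th step is an up step iff
`n+1−i` is a pinnacle. -/
theorem statement5 (n : ℕ) (σ : List ℕ) (hσ : σ.Perm (List.range' 1 (n+1))) :
    IsMotzkinPath (motzkinType σ) ∧ (motzkinType σ).length = n - 1 ∧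
    (∀ i, 1 ≤ i → i ≤ n - 1 →
      ((motzkinType σ).getD (i-1) 0 = 1 ↔ (n + 1 - i) ∈ cycPinnacleSet σ)) := by
  open CyclicRuns CyclicPerm in
  have hlen : (motzkinType σ).length = n - 1 := by
    rw [length_motzkinType, length_eq hσ]
    omega
  rcases Nat.lt_or_ge n 2 with hn | hn
  · have hnil : motzkinType σ = [] := List.eq_nil_of_length_eq_zero (by omega)
    exact ⟨hnil ▸ ⟨by simp, by simp, by simp⟩, hlen, fun i _ _ => by omega⟩
  refine ⟨⟨?steps, ?heights, ?total⟩, hlen, ?pinnacles⟩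
  case steps =>
    intro s hs
    obtain ⟨k, hk, rfl⟩ := List.getElem_of_mem hs
    rw [← List.getD_eq_getElem _ 0 hk]
    exact motzkinType_getD_mem hσ (by omega)
  case heights =>
    intro i hi
    rw [List.mem_range, hlen] at hi
    rw [sum_take_motzkinType_eq hσ (by omega)]
    have := one_le_segCount hσ (m := n + 1 - i) (by omega) (by omega)
    omega
  case total =>
    rw [← List.take_of_length_le hlen.le, sum_take_motzkinType_eq hσ (by omega),
      show n + 1 - (n - 1) = 2 by omega, segCount_two hσ (by omega)]
    rfl
  case pinnacles =>
    intro i h1 h2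
    rw [show i - 1 = n - (n + 1 - i) by omega]
    exact motzkinType_getD_eq_one_iff hσ (by omega) (by omega)
end

section
/- For every permutation π of [n], the length of the Dyck type of cyc(π) equals 2·|Pin(π)|. -/
/-!
Write `L = π ++ [n+1]` as a cyclic word and let `s_m` count its maximal runs of entries `≥ m`.
Lowering the threshold from `m + 1` to `m` inserts the single entry `m`: this creates a new run
when both cyclic neighbours of `m` are smaller, merges two runs when both are larger, and changes
nothing otherwise. So the step `s_m - s_{m+1}` of the Motzkin type is `+1` at cyclic peaks, `-1`
at cyclic valleys and `0` otherwise. Because `n + 1` closes the cycle, the cyclic peaks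
`2 ≤ m ≤ n` are exactly the pinnacles of `π`, and since `s_2 = s_{n+1} = 1` the up and down
steps balance, so the Dyck type has `2 |Pin π|` steps.
-/

open Finset

lemma Nat.add_one_mod_eq_iff {N i j : ℕ} (hi : i < N) (hj : j < N) :
    (i + 1) % N = j ↔ i = (j + N - 1) % N := by
  have hsucc : (i + 1) % N = if i + 1 = N then 0 else i + 1 := by
    split_ifs with h
    · simp [h]
    · exact Nat.mod_eq_of_lt (by omega)
  have hpred : (j + N - 1) % N = if j = 0 then N - 1 else j - 1 := by
    split_ifs with h
    · subst h
      rw [Nat.zero_add]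
      exact Nat.mod_eq_of_lt (by omega)
    · rw [show j + N - 1 = j - 1 + N by omega, Nat.add_mod_right]
      exact Nat.mod_eq_of_lt (by omega)
  rw [hsucc, hpred]
  split_ifs <;> omega

lemma Nat.add_one_mod_ne_self {N : ℕ} (hN : 2 ≤ N) (i : ℕ) : (i + 1) % N ≠ i := by
  intro h
  have hlt := Nat.mod_lt (i + 1) (show 0 < N by omega)
  rcases Nat.lt_or_ge (i + 1) N with hi | hi
  · rw [Nat.mod_eq_of_lt hi] at h
    omega
  · obtain rfl : N = i + 1 := by omega
    rw [Nat.mod_self] at h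
    omega

namespace List

variable {L : List ℕ} {m i : ℕ}

lemma getD_mem_of_lt (hi : i < L.length) : L.getD i 0 ∈ L := by
  rw [L.getD_eq_getElem 0 hi]
  exact L.getElem_mem hi

lemma Nodup.getD_eq_iff (hnd : L.Nodup) (hi : i < L.length) : L.getD i 0 = m ↔ i = L.idxOf m := by
  rw [L.getD_eq_getElem 0 hi]
  constructor
  · rintro rfl
    exact (hnd.idxOf_getElem i hi).symm
  · rintro rfl
    exact L.getElem_idxOf hi

end List

lemma card_filter_ne_zero_eq_two_mul {ι : Type*} (s : Finset ι) (F : ι → ℤ)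
    (hF : ∀ i ∈ s, F i = 1 ∨ F i = 0 ∨ F i = -1) (hsum : ∑ i ∈ s, F i = 0) :
    #{i ∈ s | F i ≠ 0} = 2 * #{i ∈ s | F i = 1} := by
  have hind : ∀ i ∈ s,
      (if F i ≠ 0 then 1 else 0 : ℤ) = 2 * (if F i = 1 then 1 else 0) - F i := by
    intro i hi
    rcases hF i hi with h | h | h <;> simp [h]
  zify
  rw [card_filter, card_filter]
  push_cast
  rw [sum_congr rfl hind, sum_sub_distrib, hsum, ← mul_sum, sub_zero]

def cycNext (L : List ℕ) (m : ℕ) : ℕ := L.getD ((L.idxOf m + 1) % L.length) 0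

def cycPrev (L : List ℕ) (m : ℕ) : ℕ := L.getD ((L.idxOf m + L.length - 1) % L.length) 0

def heightStep (L : List ℕ) (m : ℕ) : ℤ :=
  (if cycNext L m < m then 1 else 0) - (if m < cycPrev L m then 1 else 0)

section CyclicWord

variable {L : List ℕ} {m : ℕ}

lemma heightStep_trichotomy (L : List ℕ) (m : ℕ) :
    heightStep L m = 1 ∨ heightStep L m = 0 ∨ heightStep L m = -1 := by
  unfold heightStep
  split_ifs <;> norm_num

lemma cycNext_mem (hm : m ∈ L) : cycNext L m ∈ L :=
  List.getD_mem_of_lt (Nat.mod_lt _ (List.length_pos_of_mem hm))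

lemma cycPrev_mem (hm : m ∈ L) : cycPrev L m ∈ L :=
  List.getD_mem_of_lt (Nat.mod_lt _ (List.length_pos_of_mem hm))

lemma cycNext_ne (hnd : L.Nodup) (hlen : 2 ≤ L.length) : cycNext L m ≠ m := by
  rw [cycNext, Ne, hnd.getD_eq_iff (Nat.mod_lt _ (by omega))]
  exact Nat.add_one_mod_ne_self hlen _

lemma cycPrev_ne (hnd : L.Nodup) (hm : m ∈ L) (hlen : 2 ≤ L.length) : cycPrev L m ≠ m := by
  have hj := List.idxOf_lt_length_iff.mpr hm
  have hp := Nat.mod_lt (L.idxOf m + L.length - 1) (show 0 < L.length by omega)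
  rw [cycPrev, Ne, hnd.getD_eq_iff hp]
  intro h
  have h' := (Nat.add_one_mod_eq_iff hp hj).mpr rfl
  rw [h] at h'
  exact Nat.add_one_mod_ne_self hlen _ h'

lemma segCount_sub_segCount_add_one (hnd : L.Nodup) (hm : m ∈ L) :
    (segCount L m : ℤ) - segCount L (m + 1) = heightStep L m := by
  simp only [segCount, card_filter]
  push_cast
  set N := L.length
  set j := L.idxOf m
  set p := (j + N - 1) % N
  have hj : j < N := List.idxOf_lt_length_iff.mpr hm
  have hp : p < N := Nat.mod_lt _ (by omega)
  have hterm : ∀ i ∈ range N,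
      (if m ≤ L.getD i 0 ∧ L.getD ((i + 1) % N) 0 < m then 1 else 0 : ℤ) -
        (if m + 1 ≤ L.getD i 0 ∧ L.getD ((i + 1) % N) 0 < m + 1 then 1 else 0) =
      (if i = j then (if L.getD ((i + 1) % N) 0 < m then 1 else 0) else 0) -
        (if i = p then (if m < L.getD i 0 then 1 else 0) else 0) := by
    intro i hi
    rw [mem_range] at hi
    have hcur : L.getD i 0 = m ↔ i = j := hnd.getD_eq_iff hi
    have hsucc : L.getD ((i + 1) % N) 0 = m ↔ i = p :=
      (hnd.getD_eq_iff (Nat.mod_lt _ (by omega))).trans (Nat.add_one_mod_eq_iff hi hj)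
    simp only [← hcur, ← hsucc]
    split_ifs <;> omega
  rw [← sum_sub_distrib, sum_congr rfl hterm, sum_sub_distrib, sum_ite_eq', sum_ite_eq',
    if_pos (mem_range.mpr hj), if_pos (mem_range.mpr hp), heightStep, cycNext, cycPrev]

lemma segCount_eq_zero_of_forall_le (h : ∀ x ∈ L, m ≤ x) : segCount L m = 0 := by
  refine card_eq_zero.mpr (filter_eq_empty_iff.mpr fun i hi ⟨_, hlt⟩ => ?_)
  have hN : 0 < L.length := by
    rw [mem_range] at hi
    omega
  exact absurd (h _ (List.getD_mem_of_lt (Nat.mod_lt (i + 1) hN))) (not_le.mpr hlt)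

lemma segCount_eq_zero_of_forall_lt (h : ∀ x ∈ L, x < m) : segCount L m = 0 :=
  card_eq_zero.mpr (filter_eq_empty_iff.mpr fun _ hi ⟨hle, _⟩ =>
    absurd (h _ (List.getD_mem_of_lt (mem_range.mp hi))) (not_lt.mpr hle))

lemma heightStep_eq_one_of_forall_le (hnd : L.Nodup) (hm : m ∈ L) (hlen : 2 ≤ L.length)
    (hmax : ∀ x ∈ L, x ≤ m) : heightStep L m = 1 := by
  have hnext : cycNext L m < m := lt_of_le_of_ne (hmax _ (cycNext_mem hm)) (cycNext_ne hnd hlen)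
  have hprev : ¬ m < cycPrev L m := not_lt.mpr (hmax _ (cycPrev_mem hm))
  simp [heightStep, hnext, hprev]

lemma heightStep_eq_neg_one_of_forall_ge (hnd : L.Nodup) (hm : m ∈ L) (hlen : 2 ≤ L.length)
    (hmin : ∀ x ∈ L, m ≤ x) : heightStep L m = -1 := by
  have hnext : ¬ cycNext L m < m := not_lt.mpr (hmin _ (cycNext_mem hm))
  have hprev : m < cycPrev L m :=
    lt_of_le_of_ne (hmin _ (cycPrev_mem hm)) (cycPrev_ne hnd hm hlen).symm
  simp [heightStep, hnext, hprev]

end CyclicWord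

section Permutation

variable {n : ℕ} {L : List ℕ}

lemma sum_heightStep_Icc (hL : L.Perm (List.range' 1 (n + 1))) :
    ∑ m ∈ Icc 2 n, heightStep L m = 0 := by
  rcases Nat.lt_or_ge n 2 with hn | hn
  · rw [Icc_eq_empty (by omega), sum_empty]
  have hnd : L.Nodup := hL.nodup_iff.mpr List.nodup_range'
  have hmem : ∀ x, x ∈ L ↔ 1 ≤ x ∧ x ≤ n + 1 := fun x =>
    hL.mem_iff.trans (by simp; omega)
  have hlen : 2 ≤ L.length := by
    rw [hL.length_eq, List.length_range']
    omega
  have hstep := fun m (hm : 1 ≤ m ∧ m ≤ n + 1) =>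
    segCount_sub_segCount_add_one hnd ((hmem m).2 hm)
  have hbot : (segCount L 2 : ℤ) = 1 := by
    have h1 : (segCount L 1 : ℤ) - segCount L 2 = heightStep L 1 := hstep 1 ⟨le_rfl, by omega⟩
    rw [heightStep_eq_neg_one_of_forall_ge hnd ((hmem 1).2 ⟨le_rfl, by omega⟩) hlen
      (fun x hx => ((hmem x).1 hx).1), segCount_eq_zero_of_forall_le
      (fun x hx => ((hmem x).1 hx).1)] at h1
    omega
  have htop : (segCount L (n + 1) : ℤ) = 1 := by
    have h1 := hstep (n + 1) ⟨by omega, le_rfl⟩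
    rw [heightStep_eq_one_of_forall_le hnd ((hmem _).2 ⟨by omega, le_rfl⟩) hlen
      (fun x hx => ((hmem x).1 hx).2), segCount_eq_zero_of_forall_lt
      (fun x hx => Nat.lt_succ_of_le ((hmem x).1 hx).2)] at h1
    omega
  calc ∑ m ∈ Icc 2 n, heightStep L m
      = ∑ m ∈ Icc 2 n, (-(segCount L (m + 1) : ℤ) - -(segCount L m : ℤ)) :=
        sum_congr rfl fun m hm => by
          rw [← hstep m (by simp at hm; omega)]
          ring
    _ = 0 := by
      rw [sum_Icc_sub hn (fun m => -(segCount L m : ℤ)), htop, hbot]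
      norm_num

lemma motzkinType_eq_map_heightStep (hL : L.Perm (List.range' 1 (n + 1))) :
    motzkinType L = (List.range (n - 1)).map (fun i => heightStep L (n - i)) := by
  have hnd : L.Nodup := hL.nodup_iff.mpr List.nodup_range'
  have hlen : L.length = n + 1 := by simp [hL.length_eq]
  rw [motzkinType, hlen, show n + 1 - 2 = n - 1 by omega]
  refine List.map_congr_left fun i hi => ?_
  rw [List.mem_range] at hi
  rw [show n + 1 - 1 - i = n - i by omega, show n + 1 - i = n - i + 1 by omega]
  exact segCount_sub_segCount_add_one hnd (hL.mem_iff.mpr (List.mem_range'_1.mpr (by omega)))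

lemma length_dyckType (hL : L.Perm (List.range' 1 (n + 1))) :
    (dyckType L).length = #{m ∈ Icc 2 n | heightStep L m ≠ 0} := by
  have hrev : (List.range (n - 1)).map (fun i => n - i) = (List.range' 2 (n - 1)).reverse := by
    rw [List.reverse_range']
    exact List.map_congr_left fun i hi => by
      rw [List.mem_range] at hi
      omega
  rw [dyckType, motzkinType_eq_map_heightStep hL, ← List.countP_eq_length_filter,
    show (fun i => heightStep L (n - i)) = heightStep L ∘ (fun i => n - i) from rfl,
    ← List.map_map, hrev, List.countP_map, List.countP_reverse, Nat.Icc_eq_range', card_def,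
    filter_val, Multiset.filter_coe, Multiset.coe_card, ← List.countP_eq_length_filter,
    show n + 1 - 2 = n - 1 by omega]
  rfl

end Permutation

lemma pinnacleSet_subset_Icc {n : ℕ} {l : List ℕ} (hl : l.Perm (List.range' 1 n)) :
    pinnacleSet l ⊆ Icc 2 n := by
  intro m hm
  simp only [pinnacleSet, mem_image, mem_filter, mem_Ioo] at hm
  obtain ⟨i, ⟨⟨hi0, hi1⟩, hlt, -⟩, rfl⟩ := hm
  have hval : ∀ k < l.length, 1 ≤ l.getD k 0 ∧ l.getD k 0 < 1 + n := fun k hk =>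
    List.mem_range'_1.mp (hl.mem_iff.mp (List.getD_mem_of_lt hk))
  have := hval i (by omega)
  have := hval (i - 1) (by omega)
  rw [mem_Icc]
  omega

lemma mem_pinnacleSet_iff {l : List ℕ} {m : ℕ} (hnd : l.Nodup) :
    m ∈ pinnacleSet l ↔ 0 < l.idxOf m ∧ l.idxOf m + 1 < l.length ∧
      l.getD (l.idxOf m - 1) 0 < m ∧ l.getD (l.idxOf m + 1) 0 < m := by
  simp only [pinnacleSet, mem_image, mem_filter, mem_Ioo]
  constructor
  · rintro ⟨i, ⟨⟨hi0, hi1⟩, hlt⟩, hi⟩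
    obtain rfl := (hnd.getD_eq_iff (by omega)).mp hi
    rw [hi] at hlt
    exact ⟨hi0, by omega, hlt⟩
  · rintro ⟨h0, h1, hlt⟩
    have hidx := (hnd.getD_eq_iff (m := m) (show l.idxOf m < l.length by omega)).mpr rfl
    exact ⟨l.idxOf m, ⟨⟨h0, by omega⟩, by rwa [hidx]⟩, hidx⟩

lemma heightStep_append_eq_one_iff {l : List ℕ} {x m : ℕ} (hnd : l.Nodup)
    (hx : ∀ y ∈ l, y < x) (hm : m ∈ l) :
    heightStep (l ++ [x]) m = 1 ↔ m ∈ pinnacleSet l := by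
  rw [mem_pinnacleSet_iff hnd, heightStep]
  set j := l.idxOf m
  have hj : j < l.length := List.idxOf_lt_length_iff.mpr hm
  have hidx : (l ++ [x]).idxOf m = j := List.idxOf_append_of_mem hm
  have hgetD : ∀ i ≤ l.length,
      (l ++ [x]).getD i 0 = if i < l.length then l.getD i 0 else x := by
    intro i hi
    split_ifs with h
    · exact List.getD_append _ _ _ _ h
    · rw [List.getD_append_right _ _ _ _ (by omega), show i - l.length = 0 by omega]
      rfl
  have hnext : cycNext (l ++ [x]) m = if j + 1 < l.length then l.getD (j + 1) 0 else x := by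
    rw [cycNext, hidx, List.length_append, List.length_singleton,
      Nat.mod_eq_of_lt (by omega), hgetD _ (by omega)]
  have hprev : cycPrev (l ++ [x]) m = if j = 0 then x else l.getD (j - 1) 0 := by
    rw [cycPrev, hidx, List.length_append, List.length_singleton]
    rcases Nat.eq_zero_or_pos j with h0 | h0
    · rw [if_pos h0, h0, show 0 + (l.length + 1) - 1 = l.length by omega,
        Nat.mod_eq_of_lt (by omega), hgetD _ le_rfl, if_neg (lt_irrefl _)]
    · rw [if_neg h0.ne', show j + (l.length + 1) - 1 = j - 1 + (l.length + 1) by omega,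
        Nat.add_mod_right, Nat.mod_eq_of_lt (by omega), hgetD _ (by omega), if_pos (by omega)]
  have hne : 0 < j → l.getD (j - 1) 0 ≠ m := fun h h' =>
    absurd ((hnd.getD_eq_iff (by omega)).mp h') (by omega)
  have hxm := hx m hm
  rw [hnext, hprev]
  split_ifs <;> omega

/-- Proposition `dyck-len-pin`: the length of the Dyck type of
`cyc(π)` is `2 |Pin(π)|`. -/
theorem statement9 (n : ℕ) (l : List ℕ) (hl : l.Perm (List.range' 1 n)) :
    (dyckType (l ++ [n+1])).length = 2 * (pinnacleSet l).card := by
  have hL : (l ++ [n + 1]).Perm (List.range' 1 (n + 1)) := by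
    rw [List.range'_concat, one_mul, Nat.add_comm 1 n]
    exact hl.append_right _
  have hnd : l.Nodup := hl.nodup_iff.mpr List.nodup_range'
  have hmem : ∀ m, m ∈ l ↔ 1 ≤ m ∧ m ≤ n := fun m => hl.mem_iff.trans (by simp; omega)
  have hx : ∀ y ∈ l, y < n + 1 := fun y hy => Nat.lt_succ_of_le ((hmem y).1 hy).2
  rw [length_dyckType hL, card_filter_ne_zero_eq_two_mul _ _
    (fun m _ => heightStep_trichotomy _ m) (sum_heightStep_Icc hL)]
  congr 2
  ext m
  rw [mem_filter, mem_Icc]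
  constructor
  · rintro ⟨⟨h2, hn⟩, h⟩
    exact (heightStep_append_eq_one_iff hnd hx ((hmem m).2 ⟨by omega, hn⟩)).1 h
  · intro h
    have hm := mem_Icc.mp (pinnacleSet_subset_Icc hl h)
    exact ⟨hm, (heightStep_append_eq_one_iff hnd hx ((hmem m).2 ⟨by omega, hm.2⟩)).2 h⟩
end

section
/- For k ≥ 1, m ∈ ℕ, and pairwise distinct elements x_1, …, x_k of a field, the complete homogeneous symmetric polynomial satisfies h_m(x_1, …, x_k) = Σ_{1 ≤ i ≤ k} x_i^{m+k−1} / ∏_{j ≠ i} (x_i − x_j). -/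
/-! The right-hand side is the divided difference of `t ↦ t ^ (m + k - 1)` at the nodes `x_i`.
Adjoining a node `a` to a node set `s`, both sides obey the same recurrence:
`h_{m+1}(a, s) = h_{m+1}(s) + x_a h_m(a, s)`, and `[a, s](t f) = [s] f + x_a [a, s] f` for
divided differences. The base case `m = 0` holds because the divided difference of `t ^ (#s - 1)`
over `#s` nodes is the leading coefficient of its Lagrange interpolant, namely `1`. -/

open Finset

section

variable {ι R F : Type*} [DecidableEq ι]

def completeHomogeneous [CommSemiring R] (s : Finset ι) (x : ι → R) (m : ℕ) : R :=
  ∑ c ∈ piAntidiag s m, ∏ i ∈ s, x i ^ c i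

def dividedDifference [Field F] (s : Finset ι) (x : ι → F) (f : F → F) : F :=
  ∑ i ∈ s, f (x i) / ∏ j ∈ s.erase i, (x i - x j)

section CompleteHomogeneous

variable [CommSemiring R] {s : Finset ι} {x : ι → R}

@[simp]
lemma completeHomogeneous_zero (s : Finset ι) (x : ι → R) : completeHomogeneous s x 0 = 1 := by
  simp [completeHomogeneous]

lemma completeHomogeneous_cons {a : ι} (ha : a ∉ s) (m : ℕ) :
    completeHomogeneous (cons a s ha) x m =
      ∑ p ∈ antidiagonal m, x a ^ p.1 * completeHomogeneous s x p.2 := by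
  rw [completeHomogeneous, piAntidiag_cons, sum_disjiUnion]
  refine sum_congr rfl fun p _ => ?_
  rw [sum_map, completeHomogeneous, mul_sum]
  refine sum_congr rfl fun c hc => ?_
  have hca : c a = 0 := by
    by_contra h
    exact ha ((mem_piAntidiag.1 hc).2 a h)
  rw [prod_cons, addRightEmbedding_apply, Pi.add_apply, hca, zero_add, if_pos rfl]
  congr 1
  refine prod_congr rfl fun i hi => ?_
  rw [Pi.add_apply, if_neg (ne_of_mem_of_not_mem hi ha), add_zero]

lemma completeHomogeneous_cons_succ {a : ι} (ha : a ∉ s) (m : ℕ) :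
    completeHomogeneous (cons a s ha) x (m + 1) =
      completeHomogeneous s x (m + 1) + x a * completeHomogeneous (cons a s ha) x m := by
  rw [completeHomogeneous_cons, completeHomogeneous_cons, Nat.sum_antidiagonal_succ, mul_sum]
  simp only [pow_zero, one_mul, pow_succ', mul_assoc]

lemma completeHomogeneous_singleton (a : ι) (x : ι → R) (m : ℕ) :
    completeHomogeneous {a} x m = x a ^ m := by
  induction m with
  | zero => simp
  | succ m ih =>
    rw [← cons_empty a, completeHomogeneous_cons_succ, cons_empty, ih, pow_succ']
    simp [completeHomogeneous]

end CompleteHomogeneous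

section DividedDifference

variable [Field F] {s : Finset ι} {x : ι → F}

lemma dividedDifference_pow_card_sub_one (hx : Set.InjOn x s) (hs : s.Nonempty) :
    dividedDifference s x (· ^ (#s - 1)) = 1 := by
  have hdeg : #s = (Polynomial.X ^ (#s - 1) : Polynomial F).degree + 1 := by
    rw [Polynomial.degree_X_pow]
    norm_cast
    have := hs.card_pos
    omega
  simpa [dividedDifference] using (Lagrange.leadingCoeff_eq_sum hx hdeg).symm

lemma dividedDifference_cons_mul {a : ι} (ha : a ∉ s) (hxa : ∀ i ∈ s, x i ≠ x a) (f : F → F) :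
    dividedDifference (cons a s ha) x (fun t => t * f t) =
      dividedDifference s x f + x a * dividedDifference (cons a s ha) x f := by
  have hterm : ∀ i ∈ s, x i * f (x i) / ∏ j ∈ (cons a s ha).erase i, (x i - x j) =
      f (x i) / ∏ j ∈ s.erase i, (x i - x j) +
        x a * (f (x i) / ∏ j ∈ (cons a s ha).erase i, (x i - x j)) := by
    intro i hi
    have hne : x i - x a ≠ 0 := sub_ne_zero.2 (hxa i hi)
    rw [cons_eq_insert, erase_insert_of_ne (ne_of_mem_of_not_mem hi ha).symm,
      prod_insert fun h => ha (mem_of_mem_erase h)]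
    rw [mul_div_assoc', ← mul_div_mul_left (f (x i)) (∏ j ∈ s.erase i, (x i - x j)) hne, ← add_div]
    ring
  simp only [dividedDifference, sum_cons, erase_cons]
  rw [sum_congr rfl hterm, sum_add_distrib, mul_add, mul_sum]
  ring

end DividedDifference

theorem completeHomogeneous_eq_dividedDifference [Field F] {s : Finset ι} {x : ι → F}
    (hx : Set.InjOn x s) (hs : s.Nonempty) (m : ℕ) :
    completeHomogeneous s x m = dividedDifference s x (· ^ (m + #s - 1)) := by
  induction hs using Finset.Nonempty.cons_induction generalizing m with
  | singleton a => simp [completeHomogeneous_singleton, dividedDifference]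
  | cons a s ha hs ih =>
    have hxs : Set.InjOn x s := hx.mono (subset_cons ha)
    have hxa : ∀ i ∈ s, x i ≠ x a := fun i hi h =>
      ne_of_mem_of_not_mem hi ha (hx (mem_cons_of_mem hi) (mem_cons_self a s) h)
    have hcard := hs.card_pos
    induction m with
    | zero =>
      rw [completeHomogeneous_zero, zero_add]
      exact (dividedDifference_pow_card_sub_one hx (cons_nonempty ha)).symm
    | succ m ihm =>
      rw [completeHomogeneous_cons_succ, ih hxs, ihm, card_cons,
        show m + 1 + #s - 1 = m + (#s + 1) - 1 by omega,
        show m + 1 + (#s + 1) - 1 = m + (#s + 1) - 1 + 1 by omega]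
      simp_rw [pow_succ']
      exact (dividedDifference_cons_mul ha hxa _).symm

end

/-- Lemma `sum-power`: for `k ≥ 1` and pairwise distinct
`x_1, …, x_k` in a field,
`h_m(x_1, …, x_k) = Σ_i x_i^{m+k−1} / ∏_{j ≠ i} (x_i − x_j)`. -/
theorem statement10 (F : Type*) [Field F] (k m : ℕ) (hk : 1 ≤ k)
    (x : Fin k → F) (hx : Function.Injective x) :
    (∑ c ∈ Finset.Nat.antidiagonalTuple k m, ∏ i, x i ^ c i) =
      ∑ i, x i ^ (m + k - 1) / ∏ j ∈ Finset.univ.erase i, (x i - x j) := by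
  have h := completeHomogeneous_eq_dividedDifference hx.injOn (univ_nonempty_iff.2 ⟨⟨0, hk⟩⟩) m
  rwa [completeHomogeneous, piAntidiag_univ_fin_eq_antidiagonalTuple, card_univ,
    Fintype.card_fin] at h
end

section
/- Let P = {p_1 > p_2 > ⋯ > p_k} ⊆ [n] and let D be an admissible Dyck type of P, i.e., there exists π ∈ S_n(P) with Dyck type of cyc(π) equal to D. Let ℓ_i be the starting height of the i-th up step of D. Then for all 2 ≤ i ≤ k, ℓ_i ≤ min(ℓ_{i−1} + 1, p_i − 3 − 2(k−i)). -/
/-! Read `w = π (n+1)` cyclically and let `s_m` be its number of runs of entries `≥ m`.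
Lowering the threshold from `m + 1` to `m` raises `s` by one exactly when `m` is a cyclic pinnacle
and otherwise lowers it by at most one, so the up steps of the Motzkin type sit at the pinnacles
and the `i`-th up step of the Dyck type starts at height `s_{p_i + 1} - 1`.

The bound by `ℓ_{i-1} + 1` holds for every path with steps at most `1`: only down steps separate
consecutive up steps. For the other bound, the `s_{p_i + 1}` positions just after the runs above
`p_i`, the `k - i + 1` pinnacles `≤ p_i` and their cyclic successors are pairwise distinct
positions of values `≤ p_i`, and there are only `p_i` of those. -/

namespace PinnacleDyck

open Finset

section UpSteps

lemma upPositions_cons (x : ℤ) (D : List ℤ) :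
    upPositions (x :: D) = (if x = 1 then [0] else []) ++ (upPositions D).map Nat.succ := by
  unfold upPositions
  rw [List.length_cons, List.range_succ_eq_map, List.filter_cons, List.filter_map]
  by_cases hx : x = 1 <;> simp [hx, Function.comp_def]

lemma upPositions_cons_one (D : List ℤ) :
    upPositions (1 :: D) = 0 :: (upPositions D).map Nat.succ := by
  simp [upPositions_cons]

lemma upPositions_cons_of_ne_one {x : ℤ} (hx : x ≠ 1) (D : List ℤ) :
    upPositions (x :: D) = (upPositions D).map Nat.succ := by
  simp [upPositions_cons, hx]

lemma length_upPositions (D : List ℤ) : (upPositions D).length = D.count 1 := by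
  induction D with
  | nil => rfl
  | cons x D ih =>
    by_cases hx : x = 1
    · simp [hx, upPositions_cons_one, ih]
    · simp [upPositions_cons_of_ne_one hx, ih, hx]

lemma upStart_cons_one_one (D : List ℤ) : upStart (1 :: D) 1 = 0 := by
  simp [upStart, upIdx, upPositions_cons_one]

lemma upStart_cons_one (D : List ℤ) {r : ℕ} (hr : r < (upPositions D).length) :
    upStart (1 :: D) (r + 2) = 1 + upStart D (r + 1) := by
  simp [upStart, upIdx, upPositions_cons_one, List.getElem?_eq_getElem hr]

lemma upStart_cons_of_ne_one {x : ℤ} (hx : x ≠ 1) (D : List ℤ) {r : ℕ}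
    (hr : r < (upPositions D).length) :
    upStart (x :: D) (r + 1) = x + upStart D (r + 1) := by
  simp [upStart, upIdx, upPositions_cons_of_ne_one hx, List.getElem?_eq_getElem hr]

lemma length_upPositions_filter_ne_zero (M : List ℤ) :
    (upPositions (M.filter (fun s => decide (s ≠ 0)))).length = (upPositions M).length := by
  simp only [length_upPositions]
  exact List.count_filter (by decide)

lemma upStart_filter_ne_zero (M : List ℤ) :
    ∀ r < (upPositions M).length,
      upStart (M.filter (fun s => decide (s ≠ 0))) (r + 1) = upStart M (r + 1) := by
  induction M with
  | nil => simp [upPositions]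
  | cons x M ih =>
    intro r hr
    have hlen := length_upPositions_filter_ne_zero M
    by_cases hx1 : x = 1
    · subst hx1
      rw [List.filter_cons_of_pos (by decide)]
      rw [upPositions_cons_one, List.length_cons, List.length_map] at hr
      rcases r with _ | r
      · rw [upStart_cons_one_one, upStart_cons_one_one]
      · rw [upStart_cons_one _ (by omega), upStart_cons_one _ (by omega), ih r (by omega)]
    · rw [upPositions_cons_of_ne_one hx1, List.length_map] at hr
      rw [upStart_cons_of_ne_one hx1 _ hr]
      by_cases hx0 : x = 0
      · subst hx0
        rw [List.filter_cons_of_neg (by decide), ih r hr, zero_add]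
      · rw [List.filter_cons_of_pos (by simpa using hx0),
          upStart_cons_of_ne_one hx1 _ (by omega), ih r hr]

lemma upStart_one_nonpos {D : List ℤ} (hD : ∀ s ∈ D, s ≤ 1)
    (h : 0 < (upPositions D).length) : upStart D 1 ≤ 0 := by
  induction D with
  | nil => simp [upPositions] at h
  | cons x D ih =>
    by_cases hx1 : x = 1
    · subst hx1
      rw [upStart_cons_one_one]
    · rw [upPositions_cons_of_ne_one hx1, List.length_map] at h
      rw [upStart_cons_of_ne_one hx1 _ h]
      have hx : x ≤ 0 := by have := hD x List.mem_cons_self; omega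
      linarith [ih (fun s hs => hD s (List.mem_cons_of_mem x hs)) h]

lemma upStart_succ_le {D : List ℤ} (hD : ∀ s ∈ D, s ≤ 1) :
    ∀ r, r + 1 < (upPositions D).length → upStart D (r + 2) ≤ upStart D (r + 1) + 1 := by
  induction D with
  | nil => simp [upPositions]
  | cons x D ih =>
    intro r hr
    have hD' : ∀ s ∈ D, s ≤ 1 := fun s hs => hD s (List.mem_cons_of_mem x hs)
    by_cases hx1 : x = 1
    · subst hx1
      rw [upPositions_cons_one, List.length_cons, List.length_map] at hr
      rw [upStart_cons_one _ (by omega)]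
      rcases r with _ | r
      · rw [upStart_cons_one_one]
        linarith [upStart_one_nonpos hD' (by omega)]
      · rw [upStart_cons_one _ (by omega)]
        linarith [ih hD' r (by omega)]
    · rw [upPositions_cons_of_ne_one hx1, List.length_map] at hr
      rw [upStart_cons_of_ne_one hx1 _ hr, upStart_cons_of_ne_one hx1 _ (by omega)]
      linarith [ih hD' r hr]

end UpSteps

section Cyclic

def cycSucc (N i : ℕ) : ℕ := (i + 1) % N

def cycPred (N i : ℕ) : ℕ := (i + N - 1) % N

variable {N i : ℕ}

lemma cycSucc_of_lt (h : i + 1 < N) : cycSucc N i = i + 1 := Nat.mod_eq_of_lt h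

lemma cycSucc_eq_zero (h : i + 1 = N) : cycSucc N i = 0 := by
  rw [cycSucc, h, Nat.mod_self]

lemma cycPred_of_pos (h0 : 0 < i) (h : i < N) : cycPred N i = i - 1 := by
  rw [cycPred, show i + N - 1 = i - 1 + N by omega, Nat.add_mod_right,
    Nat.mod_eq_of_lt (by omega)]

lemma cycPred_zero (h : 0 < N) : cycPred N 0 = N - 1 := by
  rw [cycPred, zero_add, Nat.mod_eq_of_lt (by omega)]

lemma cycSucc_lt (h : i < N) : cycSucc N i < N := Nat.mod_lt _ (by omega)

lemma cycPred_lt (h : i < N) : cycPred N i < N := Nat.mod_lt _ (by omega)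

lemma cycPred_cycSucc (h : i < N) : cycPred N (cycSucc N i) = i := by
  rcases Nat.lt_or_ge (i + 1) N with hi | hi
  · rw [cycSucc_of_lt hi, cycPred_of_pos (by omega) hi, Nat.add_sub_cancel]
  · rw [cycSucc_eq_zero (by omega), cycPred_zero (by omega)]
    omega

lemma cycSucc_cycPred (h : i < N) : cycSucc N (cycPred N i) = i := by
  rcases Nat.eq_zero_or_pos i with rfl | hi
  · rw [cycPred_zero (by omega), cycSucc_eq_zero (by omega)]
  · rw [cycPred_of_pos hi h, cycSucc_of_lt (by omega), Nat.sub_add_cancel hi]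

lemma cycSucc_injOn : Set.InjOn (cycSucc N) (range N) := fun a ha b hb hab => by
  rw [← cycPred_cycSucc (mem_range.mp ha), hab, cycPred_cycSucc (mem_range.mp hb)]

lemma cycPred_ne_self (hN : 2 ≤ N) (h : i < N) : cycPred N i ≠ i := by
  rcases Nat.eq_zero_or_pos i with rfl | hi
  · rw [cycPred_zero (by omega)]; omega
  · rw [cycPred_of_pos hi h]; omega

end Cyclic

def cycPinnaclePositions (w : List ℕ) : Finset ℕ :=
  (range w.length).filter fun i =>
    w.getD (cycPred w.length i) 0 < w.getD i 0 ∧ w.getD (cycSucc w.length i) 0 < w.getD i 0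

lemma cycPinnacleSet_eq_image (w : List ℕ) :
    cycPinnacleSet w = (cycPinnaclePositions w).image (w.getD · 0) := rfl

section RunCount

variable (w : List ℕ) (m : ℕ)

def runEnds : Finset ℕ :=
  {i ∈ range w.length | m ≤ w.getD i 0 ∧ w.getD (cycSucc w.length i) 0 < m}

lemma segCount_eq_card_runEnds : segCount w m = #(runEnds w m) := rfl

variable {w m}

lemma mem_runEnds {i : ℕ} :
    i ∈ runEnds w m ↔
      i < w.length ∧ m ≤ w.getD i 0 ∧ w.getD (cycSucc w.length i) 0 < m := by
  simp [runEnds]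

lemma mem_cycPinnaclePositions {i : ℕ} :
    i ∈ cycPinnaclePositions w ↔ i < w.length ∧ w.getD (cycPred w.length i) 0 < w.getD i 0 ∧
      w.getD (cycSucc w.length i) 0 < w.getD i 0 := by
  simp [cycPinnaclePositions]

lemma disjoint_cycPinnaclePositions_image_cycSucc :
    Disjoint (cycPinnaclePositions w) ((cycPinnaclePositions w).image (cycSucc w.length)) := by
  rw [disjoint_left]
  rintro _ hx hx'
  obtain ⟨q, hq, rfl⟩ := mem_image.mp hx'
  rw [mem_cycPinnaclePositions] at hx hq
  rw [cycPred_cycSucc hq.1] at hx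
  omega

/-- Positions on the right are preceded by values at most `m`, those on the left by values
above `m`. -/
lemma disjoint_image_cycSucc_runEnds :
    Disjoint ((runEnds w (m + 1)).image (cycSucc w.length))
      ({i ∈ cycPinnaclePositions w | w.getD i 0 ≤ m} ∪
        {i ∈ cycPinnaclePositions w | w.getD i 0 ≤ m}.image (cycSucc w.length)) := by
  rw [disjoint_left]
  rintro _ hx hx'
  obtain ⟨i, hi, rfl⟩ := mem_image.mp hx
  rw [mem_runEnds] at hi
  simp only [mem_union, mem_image, mem_filter, mem_cycPinnaclePositions] at hx'
  rcases hx' with ⟨⟨-, hpred, -⟩, hle⟩ | ⟨q, ⟨⟨hq, -, -⟩, hle⟩, hqi⟩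
  · rw [cycPred_cycSucc hi.1] at hpred
    omega
  · rw [cycSucc_injOn (mem_range.mpr hq) (mem_range.mpr hi.1) hqi] at hle
    omega

lemma image_cycSucc_runEnds_union_subset :
    (runEnds w (m + 1)).image (cycSucc w.length) ∪
        ({i ∈ cycPinnaclePositions w | w.getD i 0 ≤ m} ∪
          {i ∈ cycPinnaclePositions w | w.getD i 0 ≤ m}.image (cycSucc w.length)) ⊆
      {i ∈ range w.length | w.getD i 0 ≤ m} := by
  intro x hx
  simp only [mem_union, mem_image, mem_filter, mem_runEnds, mem_cycPinnaclePositions] at hx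
  rw [mem_filter, mem_range]
  rcases hx with ⟨i, hi, rfl⟩ | ⟨⟨hx, -, -⟩, hle⟩ |
    ⟨q, ⟨⟨hq, -, hsucc⟩, hle⟩, rfl⟩
  · exact ⟨cycSucc_lt hi.1, by omega⟩
  · exact ⟨hx, hle⟩
  · exact ⟨cycSucc_lt hq, by omega⟩

end RunCount

lemma segCount_succ_add_two_mul_card_le (w : List ℕ) (m : ℕ) :
    segCount w (m + 1) + 2 * #{i ∈ cycPinnaclePositions w | w.getD i 0 ≤ m} ≤
      #{i ∈ range w.length | w.getD i 0 ≤ m} := by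
  set Q := {i ∈ cycPinnaclePositions w | w.getD i 0 ≤ m}
  have hQ : Q ⊆ range w.length := (filter_subset _ _).trans (filter_subset _ _)
  have hR : runEnds w (m + 1) ⊆ range w.length := filter_subset _ _
  have hQQ : Disjoint Q (Q.image (cycSucc w.length)) :=
    disjoint_cycPinnaclePositions_image_cycSucc.mono (filter_subset _ _)
      (image_subset_image (filter_subset _ _))
  calc segCount w (m + 1) + 2 * #Q
      = #((runEnds w (m + 1)).image (cycSucc w.length)) +
          #(Q ∪ Q.image (cycSucc w.length)) := by
        rw [card_union_of_disjoint hQQ, card_image_of_injOn (cycSucc_injOn.mono hR),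
          card_image_of_injOn (cycSucc_injOn.mono hQ), segCount_eq_card_runEnds]
        ring
    _ = #((runEnds w (m + 1)).image (cycSucc w.length) ∪ (Q ∪ Q.image (cycSucc w.length))) :=
        (card_union_of_disjoint disjoint_image_cycSucc_runEnds).symm
    _ ≤ #{i ∈ range w.length | w.getD i 0 ≤ m} :=
        card_le_card image_cycSucc_runEnds_union_subset

section Nodup

variable {w : List ℕ}

lemma getD_mem {i : ℕ} (h : i < w.length) : w.getD i 0 ∈ w := by
  rw [List.getD_eq_getElem _ _ h]
  exact List.getElem_mem h

lemma getD_injOn (hw : w.Nodup) : Set.InjOn (w.getD · 0) (range w.length) := by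
  intro i hi j hj hij
  simp only [coe_range, Set.mem_Iio] at hi hj
  simp only [List.getD_eq_getElem _ _ hi, List.getD_eq_getElem _ _ hj] at hij
  exact (hw.getElem_inj_iff).mp hij

lemma mem_cycPinnacleSet_iff (hw : w.Nodup) {a : ℕ} (ha : a < w.length) :
    w.getD a 0 ∈ cycPinnacleSet w ↔ a ∈ cycPinnaclePositions w := by
  rw [cycPinnacleSet_eq_image]
  refine ⟨fun h => ?_, mem_image_of_mem _⟩
  obtain ⟨i, hi, hia⟩ := mem_image.mp h
  have hi' : i ∈ range w.length := (filter_subset _ _) hi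
  rwa [← getD_injOn hw hi' (mem_range.mpr ha) hia]

/-- Passing from threshold `m + 1` to `m` can only create a run ending at the position of `m`
and only destroy one ending just before it. -/
lemma segCount_sub_segCount_succ (hw : w.Nodup) (hN : 2 ≤ w.length) {a : ℕ}
    (ha : a < w.length) :
    (segCount w (w.getD a 0) : ℤ) - segCount w (w.getD a 0 + 1) =
      (if w.getD (cycSucc w.length a) 0 < w.getD a 0 then 1 else 0) -
        (if w.getD a 0 < w.getD (cycPred w.length a) 0 then 1 else 0) := by
  have hb : cycPred w.length a < w.length := cycPred_lt ha
  have hinj := getD_injOn hw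
  simp only [segCount_eq_card_runEnds, runEnds, card_filter, Nat.cast_sum, Nat.cast_ite,
    Nat.cast_one, Nat.cast_zero, ← sum_sub_distrib]
  have hsub : ({a, cycPred w.length a} : Finset ℕ) ⊆ range w.length := by
    simp [insert_subset_iff, ha, hb]
  rw [← sum_subset hsub, sum_pair (cycPred_ne_self hN ha).symm, cycSucc_cycPred ha]
  · split_ifs <;> omega
  · intro i hi hiab
    simp only [mem_insert, mem_singleton, not_or] at hiab
    have hi' : i < w.length := mem_range.mp hi
    have hvi : w.getD i 0 ≠ w.getD a 0 := fun h => hiab.1 (hinj hi (mem_range.mpr ha) h)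
    have hvs : w.getD (cycSucc w.length i) 0 ≠ w.getD a 0 := fun h => hiab.2 <| by
      rw [← cycPred_cycSucc hi', hinj (mem_range.mpr (cycSucc_lt hi')) (mem_range.mpr ha) h]
    split_ifs <;> omega

lemma segCount_sub_segCount_succ_eq_one_iff (hw : w.Nodup) (hN : 2 ≤ w.length) {m : ℕ}
    (hm : m ∈ w) :
    (segCount w m : ℤ) - segCount w (m + 1) = 1 ↔ m ∈ cycPinnacleSet w := by
  obtain ⟨a, ha, rfl⟩ := List.getElem_of_mem hm
  rw [← List.getD_eq_getElem _ 0 ha, segCount_sub_segCount_succ hw hN ha,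
    mem_cycPinnacleSet_iff hw ha]
  have hpred : w.getD (cycPred w.length a) 0 ≠ w.getD a 0 := fun h =>
    cycPred_ne_self hN ha (getD_injOn hw (mem_range.mpr (cycPred_lt ha)) (mem_range.mpr ha) h)
  simp only [cycPinnaclePositions, mem_filter, mem_range, ha, true_and]
  split_ifs <;> omega

lemma segCount_eq_zero_of_forall_lt {m : ℕ} (h : ∀ x ∈ w, x < m) : segCount w m = 0 := by
  rw [segCount_eq_card_runEnds, runEnds, card_eq_zero, filter_eq_empty_iff]
  intro i hi hm
  exact absurd (h _ (getD_mem (mem_range.mp hi))) (not_lt.mpr hm.1)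

lemma card_filter_getD_le_eq {N m : ℕ} (hw : w.Perm (List.range' 1 N)) (hm : m ≤ N) :
    #{i ∈ range w.length | w.getD i 0 ≤ m} = m := by
  have hinj := (getD_injOn (hw.nodup_iff.mpr List.nodup_range')).mono
    (filter_subset (fun i => w.getD i 0 ≤ m) (range w.length))
  suffices h : {i ∈ range w.length | w.getD i 0 ≤ m}.image (w.getD · 0) = Icc 1 m by
    rw [← card_image_of_injOn hinj, h, Nat.card_Icc, Nat.add_sub_cancel]
  ext x
  simp only [mem_image, mem_filter, mem_range, mem_Icc]
  constructor
  · rintro ⟨i, ⟨hi, him⟩, rfl⟩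
    have := List.mem_range'_1.mp (hw.mem_iff.mp (getD_mem hi))
    omega
  · rintro ⟨h1, hxm⟩
    obtain ⟨i, hi, rfl⟩ :=
      List.getElem_of_mem (hw.mem_iff.mpr (List.mem_range'_1.mpr ⟨h1, by omega⟩))
    exact ⟨i, ⟨hi, by rwa [List.getD_eq_getElem]⟩, List.getD_eq_getElem _ _ hi⟩

end Nodup

section Motzkin

variable {w : List ℕ}

lemma length_motzkinType : (motzkinType w).length = w.length - 2 := by
  simp [motzkinType]

lemma getElem_motzkinType {t : ℕ} (ht : t < (motzkinType w).length) :
    (motzkinType w)[t] =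
      (segCount w (w.length - 1 - t) : ℤ) - segCount w (w.length - t) := by
  simp [motzkinType]

lemma sum_take_motzkinType {j : ℕ} (hj : j ≤ w.length - 2) :
    ((motzkinType w).take j).sum = (segCount w (w.length - j) : ℤ) - segCount w w.length := by
  induction j with
  | zero => simp
  | succ j ih =>
    have hj' : j < (motzkinType w).length := by rw [length_motzkinType]; omega
    rw [List.sum_take_succ _ _ hj', ih (by omega), getElem_motzkinType, Nat.sub_sub,
      add_comm 1 j]
    abel

lemma mem_upPositions_motzkinType {N : ℕ} (hw : w.Perm (List.range' 1 N)) {t : ℕ} :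
    t ∈ upPositions (motzkinType w) ↔ t < N - 2 ∧ N - 1 - t ∈ cycPinnacleSet w := by
  have hlen : w.length = N := by rw [hw.length_eq, List.length_range']
  simp only [upPositions, List.mem_filter, List.mem_range, length_motzkinType, hlen,
    decide_eq_true_eq]
  refine and_congr_right fun ht => ?_
  rw [List.getD_eq_getElem _ _ (by rw [length_motzkinType, hlen]; exact ht),
    getElem_motzkinType, hlen, show N - t = N - 1 - t + 1 by omega]
  exact segCount_sub_segCount_succ_eq_one_iff (hw.nodup_iff.mpr List.nodup_range') (by omega)
    (hw.mem_iff.mpr (List.mem_range'_1.mpr (by omega)))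

end Motzkin

lemma exists_lt_of_mem_pinnacleSet {l : List ℕ} {p : ℕ} (hp : p ∈ pinnacleSet l) :
    p ∈ l ∧ ∃ q ∈ l, q < p := by
  simp only [pinnacleSet, mem_image, mem_filter, mem_Ioo] at hp
  obtain ⟨i, ⟨⟨hi0, hi⟩, hprev, -⟩, rfl⟩ := hp
  exact ⟨getD_mem (by omega), _, getD_mem (by omega), hprev⟩

lemma two_le_and_le_of_mem_pinnacleSet {n : ℕ} {l : List ℕ} (hl : l.Perm (List.range' 1 n))
    {p : ℕ} (hp : p ∈ pinnacleSet l) : 2 ≤ p ∧ p ≤ n := by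
  obtain ⟨hpl, q, hql, hqp⟩ := exists_lt_of_mem_pinnacleSet hp
  rw [hl.mem_iff, List.mem_range'_1] at hpl hql
  omega

section Completion

variable {l : List ℕ} {N : ℕ}

lemma getD_append_singleton_of_lt {i : ℕ} (h : i < l.length) :
    (l ++ [N]).getD i 0 = l.getD i 0 :=
  List.getD_append _ _ _ _ h

lemma getD_append_singleton_of_eq {i : ℕ} (h : i = l.length) : (l ++ [N]).getD i 0 = N := by
  simp [h]

lemma cycPinnaclePositions_append_singleton (hl : ∀ x ∈ l, x < N) (hne : l ≠ []) :
    cycPinnaclePositions (l ++ [N]) = insert l.length ((Ioo 0 (l.length - 1)).filter fun i =>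
      l.getD (i - 1) 0 < l.getD i 0 ∧ l.getD (i + 1) 0 < l.getD i 0) := by
  have hpos : 0 < l.length := List.length_pos_iff.mpr hne
  have hlt : ∀ i < l.length, l.getD i 0 < N := fun i hi => hl _ (getD_mem hi)
  have hlen : (l ++ [N]).length = l.length + 1 := by simp
  ext i
  simp only [cycPinnaclePositions, hlen, mem_filter, mem_range, mem_insert, mem_Ioo]
  rcases lt_trichotomy i l.length with hi | rfl | hi
  · rw [getD_append_singleton_of_lt hi]
    rcases Nat.eq_zero_or_pos i with rfl | hi0
    · rw [cycPred_zero (by omega), getD_append_singleton_of_eq (by omega)]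
      have := hlt 0 hi
      omega
    rw [cycPred_of_pos hi0 (by omega), getD_append_singleton_of_lt (by omega)]
    rcases Nat.lt_or_ge (i + 1) l.length with hi1 | hi1
    · rw [cycSucc_of_lt (by omega), getD_append_singleton_of_lt hi1]
      omega
    · rw [cycSucc_of_lt (by omega), getD_append_singleton_of_eq (by omega)]
      have := hlt i hi
      omega
  · rw [cycPred_of_pos hpos (by omega), getD_append_singleton_of_lt (by omega),
      cycSucc_eq_zero rfl, getD_append_singleton_of_lt hpos, getD_append_singleton_of_eq rfl]
    simp only [true_or, iff_true]
    exact ⟨by omega, hlt _ (by omega), hlt 0 hpos⟩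
  · omega

/-- The appended maximum rules out the two end positions of `l`. -/
lemma cycPinnacleSet_append_singleton (hl : ∀ x ∈ l, x < N) (hne : l ≠ []) :
    cycPinnacleSet (l ++ [N]) = insert N (pinnacleSet l) := by
  rw [cycPinnacleSet_eq_image, cycPinnaclePositions_append_singleton hl hne, image_insert,
    getD_append_singleton_of_eq rfl, pinnacleSet]
  congr 1
  refine image_congr fun i hi => ?_
  simp only [coe_filter, mem_Ioo, Set.mem_ofPred_eq] at hi
  exact getD_append_singleton_of_lt (by omega)

lemma pinnacleSet_subset_cycPinnacleSet (hl : ∀ x ∈ l, x < N) :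
    pinnacleSet l ⊆ cycPinnacleSet (l ++ [N]) := by
  rcases eq_or_ne l [] with rfl | hne
  · simp [pinnacleSet]
  · rw [cycPinnacleSet_append_singleton hl hne]
    exact subset_insert _ _

lemma card_filter_pinnacleSet_le (hl : ∀ x ∈ l, x < N) (m : ℕ) :
    #{p ∈ pinnacleSet l | p ≤ m} ≤
      #{j ∈ cycPinnaclePositions (l ++ [N]) | (l ++ [N]).getD j 0 ≤ m} :=
  calc #{p ∈ pinnacleSet l | p ≤ m} ≤ #{p ∈ cycPinnacleSet (l ++ [N]) | p ≤ m} :=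
        card_le_card (filter_subset_filter _ (pinnacleSet_subset_cycPinnacleSet hl))
    _ ≤ #{j ∈ cycPinnaclePositions (l ++ [N]) | (l ++ [N]).getD j 0 ≤ m} := by
        rw [cycPinnacleSet_eq_image, filter_image]
        exact card_image_le

end Completion

section SortedPinnacles

variable {n : ℕ} {P : Finset ℕ}

lemma pElem_eq_getD {i : ℕ} (h1 : 1 ≤ i) (h2 : i ≤ P.card) :
    pElem n P i = (P.sort (· ≤ ·)).getD (P.card - i) 0 := by
  simp [pElem, show i ≠ 0 by omega, h2]

lemma pElem_eq_orderEmbOfFin {i : ℕ} (h1 : 1 ≤ i) (h2 : i ≤ P.card) :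
    pElem n P i = P.orderEmbOfFin rfl ⟨P.card - i, by omega⟩ := by
  rw [pElem_eq_getD h1 h2, orderEmbOfFin_apply,
    List.getD_eq_getElem _ _ (by rw [length_sort]; omega)]
  rfl

lemma pElem_mem {i : ℕ} (h1 : 1 ≤ i) (h2 : i ≤ P.card) : pElem n P i ∈ P := by
  rw [pElem_eq_orderEmbOfFin h1 h2]
  exact orderEmbOfFin_mem _ _ _

lemma card_filter_le_pElem {i : ℕ} (h1 : 1 ≤ i) (h2 : i ≤ P.card) :
    P.card - i + 1 ≤ #{p ∈ P | p ≤ pElem n P i} := by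
  set e := P.orderEmbOfFin rfl
  set j : Fin P.card := ⟨P.card - i, by omega⟩
  calc P.card - i + 1 = #((Iic j).map e.toEmbedding) := by rw [card_map, Fin.card_Iic]
    _ ≤ #{p ∈ P | p ≤ pElem n P i} := by
      refine card_le_card fun p hp => ?_
      obtain ⟨a, ha, rfl⟩ := mem_map.mp hp
      rw [pElem_eq_orderEmbOfFin h1 h2]
      exact mem_filter.mpr ⟨orderEmbOfFin_mem _ _ _, e.monotone (mem_Iic.mp ha)⟩

end SortedPinnacles

section CyclicCompletion

variable {n : ℕ} {l : List ℕ} (hl : l.Perm (List.range' 1 n))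
include hl

lemma perm_append_singleton : (l ++ [n + 1]).Perm (List.range' 1 (n + 1)) := by
  rw [List.range'_concat, show 1 + 1 * n = n + 1 by omega]
  exact hl.append_right _

lemma length_append_singleton : (l ++ [n + 1]).length = n + 1 := by
  simp [hl.length_eq]

lemma ne_nil_of_perm (hn : 1 ≤ n) : l ≠ [] :=
  List.ne_nil_of_length_pos (by rw [hl.length_eq, List.length_range']; omega)

lemma forall_lt_succ_of_perm : ∀ x ∈ l, x < n + 1 := fun x hx => by
  have := List.mem_range'_1.mp (hl.mem_iff.mp hx)
  omega

lemma mem_upPositions_motzkinType_append {t : ℕ} :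
    t ∈ upPositions (motzkinType (l ++ [n + 1])) ↔ t < n - 1 ∧ n - t ∈ pinnacleSet l := by
  rw [mem_upPositions_motzkinType (perm_append_singleton hl), Nat.add_sub_cancel,
    show n + 1 - 2 = n - 1 by omega]
  refine and_congr_right fun ht => ?_
  rw [cycPinnacleSet_append_singleton (forall_lt_succ_of_perm hl) (ne_nil_of_perm hl (by omega)),
    mem_insert]
  exact or_iff_right (by omega)

lemma upPositions_motzkinType_append :
    upPositions (motzkinType (l ++ [n + 1])) =
      ((pinnacleSet l).sort (· ≤ ·)).reverse.map (n - ·) := by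
  have hbounds := fun p (hp : p ∈ pinnacleSet l) => two_le_and_le_of_mem_pinnacleSet hl hp
  refine List.Pairwise.eq_of_mem_iff (r := (· < ·)) ?_ ?_ fun t => ?_
  · exact List.pairwise_lt_range.filter _
  · rw [List.pairwise_map, List.pairwise_reverse]
    refine (sortedLT_sort _).pairwise.imp_of_mem fun ha hb hab => ?_
    have := (hbounds _ (mem_sort _ |>.mp hb)).2
    omega
  · rw [mem_upPositions_motzkinType_append hl, List.mem_map]
    simp only [List.mem_reverse, mem_sort]
    constructor
    · rintro ⟨ht, hp⟩
      exact ⟨n - t, hp, by omega⟩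
    · rintro ⟨p, hp, rfl⟩
      have := hbounds p hp
      exact ⟨by omega, by rwa [show n - (n - p) = p by omega]⟩

lemma length_upPositions_motzkinType_append :
    (upPositions (motzkinType (l ++ [n + 1]))).length = (pinnacleSet l).card := by
  simp [upPositions_motzkinType_append hl]

lemma upIdx_motzkinType_append {i : ℕ} (h1 : 1 ≤ i) (h2 : i ≤ (pinnacleSet l).card) :
    upIdx (motzkinType (l ++ [n + 1])) i = n - pElem n (pinnacleSet l) i := by
  rw [upIdx, upPositions_motzkinType_append hl, pElem_eq_getD h1 h2,
    List.getD_eq_getElem _ _ (by rw [List.length_map, List.length_reverse, length_sort]; omega),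
    List.getD_eq_getElem _ _ (by rw [length_sort]; omega)]
  simp only [List.getElem_map, List.getElem_reverse, length_sort]
  congr 2
  omega

lemma segCount_append_singleton_self (hn : 1 ≤ n) : segCount (l ++ [n + 1]) (n + 1) = 1 := by
  have hw := perm_append_singleton hl
  have hlen : 2 ≤ (l ++ [n + 1]).length := by rw [hw.length_eq, List.length_range']; omega
  have hmax := (segCount_sub_segCount_succ_eq_one_iff (hw.nodup_iff.mpr List.nodup_range') hlen
    List.mem_concat_self).mpr
  rw [cycPinnacleSet_append_singleton (forall_lt_succ_of_perm hl) (ne_nil_of_perm hl hn),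
    segCount_eq_zero_of_forall_lt (m := n + 1 + 1)
      fun x hx => by have := List.mem_range'_1.mp (hw.mem_iff.mp hx); omega] at hmax
  have := hmax (mem_insert_self _ _)
  omega

lemma upStart_dyckType_append {i : ℕ} (h1 : 1 ≤ i) (h2 : i ≤ (pinnacleSet l).card) :
    upStart (dyckType (l ++ [n + 1])) i =
      (segCount (l ++ [n + 1]) (pElem n (pinnacleSet l) i + 1) : ℤ) - 1 := by
  have hp := two_le_and_le_of_mem_pinnacleSet hl (pElem_mem (n := n) h1 h2)
  obtain ⟨r, rfl⟩ : ∃ r, i = r + 1 := ⟨i - 1, by omega⟩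
  rw [dyckType,
    upStart_filter_ne_zero _ r (by rw [length_upPositions_motzkinType_append hl]; omega), upStart,
    upIdx_motzkinType_append hl h1 h2,
    sum_take_motzkinType (by rw [length_append_singleton hl]; omega), length_append_singleton hl,
    segCount_append_singleton_self hl (by omega),
    show n + 1 - (n - pElem n (pinnacleSet l) (r + 1)) = pElem n (pinnacleSet l) (r + 1) + 1 by
      omega,
    Nat.cast_one]

lemma length_upPositions_dyckType_append :
    (upPositions (dyckType (l ++ [n + 1]))).length = (pinnacleSet l).card := by
  rw [dyckType, length_upPositions_filter_ne_zero, length_upPositions_motzkinType_append hl]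

lemma upStart_dyckType_append_le {i : ℕ} (h1 : 1 ≤ i) (h2 : i ≤ (pinnacleSet l).card) :
    upStart (dyckType (l ++ [n + 1])) i ≤
      (pElem n (pinnacleSet l) i : ℤ) - 3 - 2 * (((pinnacleSet l).card : ℤ) - i) := by
  have hm := two_le_and_le_of_mem_pinnacleSet hl (pElem_mem (n := n) h1 h2)
  have hcount := segCount_succ_add_two_mul_card_le (l ++ [n + 1]) (pElem n (pinnacleSet l) i)
  rw [card_filter_getD_le_eq (perm_append_singleton hl) (by omega)] at hcount
  have hpeaks :=
    card_filter_pinnacleSet_le (forall_lt_succ_of_perm hl) (pElem n (pinnacleSet l) i)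
  have hbelow := card_filter_le_pElem (n := n) h1 h2
  rw [upStart_dyckType_append hl h1 h2]
  omega

end CyclicCompletion

end PinnacleDyck

theorem statement16_general (n k : ℕ) (P : Finset ℕ)
    (hk : P.card = k)
    (D : List ℤ) (hD : IsDyckPath D)
    (hadm : ∃ l, l.Perm (List.range' 1 n) ∧ pinnacleSet l = P ∧
      dyckType (l ++ [n+1]) = D) :
    ∀ i, 2 ≤ i → i ≤ k →
      upStart D i ≤
        min (upStart D (i-1) + 1) ((pElem n P i : ℤ) - 3 - 2 * ((k : ℤ) - i)) := by
  intro i hi2 hik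
  obtain ⟨l, hl, rfl, rfl⟩ := hadm
  subst hk
  refine le_min ?_ (PinnacleDyck.upStart_dyckType_append_le hl (by omega) hik)
  obtain ⟨r, rfl⟩ : ∃ r, i = r + 2 := ⟨i - 2, by omega⟩
  have hsteps : ∀ s ∈ dyckType (l ++ [n + 1]), s ≤ 1 := fun s hs => by
    rcases hD.1 s hs with h | h <;> omega
  exact PinnacleDyck.upStart_succ_le hsteps r
    (by rw [PinnacleDyck.length_upPositions_dyckType_append hl]; omega)

/-- Proposition `dyck-type-cond`: if `D` is an admissible Dyck type
of `P`, then the starting height `ℓ_i` of its `i`-th up step satisfies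
`ℓ_i ≤ min(ℓ_{i−1} + 1, p_i − 3 − 2(k−i))` for all `2 ≤ i ≤ k`. -/
theorem statement16 (n k : ℕ) (P : Finset ℕ) (hP : P ⊆ Finset.Icc 1 n)
    (hk : P.card = k)
    (D : List ℤ) (hD : IsDyckPath D) (hlen : D.length = 2*k)
    (hadm : ∃ l, l.Perm (List.range' 1 n) ∧ pinnacleSet l = P ∧
      dyckType (l ++ [n+1]) = D) :
    ∀ i, 2 ≤ i → i ≤ k →
      upStart D i ≤
        min (upStart D (i-1) + 1) ((pElem n P i : ℤ) - 3 - 2 * ((k : ℤ) - i)) :=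
  statement16_general n k P hk D hD hadm
end

section
/- A pinnacle set P = {p_1 > p_2 > ⋯ > p_k} ⊆ [n] with S_n(P) nonempty is maximally admissible (i.e., O(P) = S_k, every permutation of [k] is an admissible pinnacle ordering of P) if and only if p_i ≥ min(2k − i + 2, 3(k+1−i)) for all 2 ≤ i ≤ k−1. -/
/-!
Write a permutation whose pinnacles appear in the order `q₁, …, q_k` as `V₀ q₁ V₁ ⋯ q_k V_k` with
nonempty valleys `V_j`, and call `j` a slot. An ordering `σ` is admissible iff for every `i` the
number of slots bordered by one of `p_i, …, p_k` is at most the number `p_i - 1 - (k - i)` of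
non-pinnacles below `p_i`. Necessity: each such valley contains a neighbour of a pinnacle `≤ p_i`,
and the valleys are disjoint. Sufficiency: give the slots, ordered by their smaller neighbouring
pinnacle, the smallest non-pinnacles as valley bottoms, and put the remaining non-pinnacles in
front in decreasing order. At most `min (2 (k + 1 - i)) (k + 1)` slots are bordered by
`p_i, …, p_k`, with equality when these alternate with `p_1, …, p_{i-1}`. For `i = 1` and `i = k`
every ordering attains this bound, so those two conditions follow from `S_n(P) ≠ ∅`.
-/

namespace List

variable {α : Type*}

lemma getD_interleave_two_mul (d : α) :
    ∀ {l₁ l₂ : List α} {t : ℕ}, t < l₁.length → t ≤ l₂.length →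
      (l₁.interleave l₂).getD (2 * t) d = l₁.getD t d
  | _ :: _, _, 0, _, _ => by simp
  | a :: l₁, b :: l₂, t + 1, h₁, h₂ => by
    simp only [cons_interleave, show 2 * (t + 1) = 2 * t + 1 + 1 by omega, getD_cons_succ]
    exact getD_interleave_two_mul d (by simpa using h₁) (by simpa using h₂)

lemma getD_interleave_of_le (d : α) :
    ∀ {l₁ l₂ : List α} {r : ℕ}, 2 * l₂.length ≤ r →
      (l₁.interleave l₂).getD r d = l₁.getD (r - l₂.length) d
  | l₁, [], r, _ => by simp
  | [], b :: l₂, r, h => by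
    rw [length_cons] at h
    rw [nil_interleave, getD_eq_default _ _ (by simp only [length_cons]; omega), getD_nil]
  | a :: l₁, b :: l₂, r, h => by
    rw [length_cons] at h
    obtain ⟨r, rfl⟩ : ∃ r', r = r' + 2 := ⟨r - 2, by omega⟩
    simp only [cons_interleave, getD_cons_succ]
    rw [getD_interleave_of_le d (by omega), length_cons,
      show r + 2 - (l₂.length + 1) = r - l₂.length + 1 by omega, getD_cons_succ]

lemma filter_interleave_of_forall {p : α → Bool} :
    ∀ {l₁ l₂ : List α}, (∀ a ∈ l₁, p a = false) → (∀ b ∈ l₂, p b = true) →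
      (l₁.interleave l₂).filter p = l₂
  | [], _, _, h₂ => by rw [nil_interleave, filter_eq_self.mpr h₂]
  | _ :: _, [], h₁, _ => by rw [interleave_nil, filter_eq_nil_iff]; simpa using h₁
  | a :: l₁, b :: l₂, h₁, h₂ => by
    simp only [forall_mem_cons] at h₁ h₂
    rw [cons_interleave, cons_interleave, filter_cons_of_neg (by simp [h₁.1]),
      filter_cons_of_pos h₂.1, filter_interleave_of_forall h₁.2 h₂.2]

lemma map_getD_range_eq_take (l : List α) (d : α) {m : ℕ} (hm : m ≤ l.length) :
    (range m).map (l.getD · d) = l.take m := by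
  apply ext_getElem (by simp; omega)
  intro i h _
  rw [length_map, length_range] at h
  simp [getElem?_eq_getElem (show i < l.length by omega)]

lemma map_getD_filter_range (l : List α) (d : α) (p : α → Bool) :
    ((range l.length).filter (fun r => p (l.getD r d))).map (l.getD · d) = l.filter p := by
  have hl : (range l.length).map (l.getD · d) = l :=
    (map_getD_range_eq_take l d le_rfl).trans (take_of_length_le le_rfl)
  conv_rhs => rw [← hl]
  rw [filter_map]
  rfl

open Finset in
lemma card_filter_range_getD (l : List ℕ) (p : ℕ → Prop) [DecidablePred p] (hp : ¬ p 0)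
    {m : ℕ} (hm : l.length ≤ m) : #{j ∈ Finset.range m | p (l.getD j 0)} = l.countP (p ·) := by
  induction l generalizing m with
  | nil => simp [hp]
  | cons a l ih =>
    rw [length_cons] at hm
    obtain ⟨m, rfl⟩ : ∃ m', m = m' + 1 := ⟨m - 1, by omega⟩
    rw [Finset.card_filter, Finset.sum_range_succ', ← Finset.card_filter]
    simp only [getD_cons_succ, getD_cons_zero, countP_cons, decide_eq_true_eq]
    rw [ih (by omega)]

lemma countP_range'_le {i : ℕ} (hi : 1 ≤ i) (k : ℕ) :
    (range' 1 k).countP (i ≤ ·) = k + 1 - i := by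
  induction k with
  | zero => rw [range'_zero, countP_nil]; omega
  | succ k ih =>
    rw [range'_concat, countP_append, ih]
    simp only [countP_singleton, decide_eq_true_eq]
    split_ifs <;> omega

end List

namespace Finset

variable {α β : Type*}

lemma card_filter_key_lt_lt_card [LinearOrder β] {S : Finset α} {key : α → β} {x : α}
    (hx : x ∈ S) : #{y ∈ S | key y < key x} < #S :=
  card_lt_card (filter_ssubset.mpr ⟨x, hx, lt_irrefl _⟩)

lemma injOn_card_filter_key_lt [LinearOrder β] {S : Finset α} {key : α → β}
    (hkey : Set.InjOn key S) : Set.InjOn (fun x => #{y ∈ S | key y < key x}) S := by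
  intro x hx y hy hxy
  by_contra hne
  wlog hlt : key x < key y generalizing x y
  · exact this hy hx hxy.symm (Ne.symm hne)
      (lt_of_le_of_ne (not_lt.mp hlt) fun h => hne (hkey hx hy h.symm))
  refine (card_lt_card ⟨?_, fun h => ?_⟩).ne hxy
  · intro z hz
    simp only [mem_filter] at hz ⊢
    exact ⟨hz.1, hz.2.trans hlt⟩
  · exact lt_irrefl _ (mem_filter.mp (h (mem_filter.mpr ⟨hx, hlt⟩))).2

lemma card_filter_lt_orderEmbOfFin [LinearOrder α] (S : Finset α) {m : ℕ} (h : S.card = m)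
    (t : Fin m) : #{x ∈ S | x < S.orderEmbOfFin h t} = t := by
  have hmap := map_orderEmbOfFin_univ S h
  generalize S.orderEmbOfFin h = f at hmap ⊢
  subst hmap
  rw [filter_map, card_map]
  simp only [Function.comp_def, RelEmbedding.coe_toEmbedding, OrderEmbedding.lt_iff_lt]
  rw [filter_gt_eq_Iio, Fin.card_Iio]

lemma getD_sort_lt [LinearOrder α] (S : Finset α) (d : α) {r : ℕ} {v : α}
    (h : r < #{x ∈ S | x < v}) : (S.sort (· ≤ ·)).getD r d < v := by
  have hr : r < #S := h.trans_le (card_filter_le _ _)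
  have he : (S.sort (· ≤ ·))[r]'(by rwa [length_sort]) = S.orderEmbOfFin rfl ⟨r, hr⟩ :=
    (orderEmbOfFin_apply S rfl ⟨r, hr⟩).symm
  rw [List.getD_eq_getElem _ _ (by rwa [length_sort]), he]
  by_contra hv
  have hsub : {x ∈ S | x < v} ⊆ {x ∈ S | x < S.orderEmbOfFin rfl ⟨r, hr⟩} := by
    intro x hx
    simp only [mem_filter] at hx ⊢
    exact ⟨hx.1, hx.2.trans_le (not_lt.mp hv)⟩
  have := card_le_card hsub
  rw [card_filter_lt_orderEmbOfFin, Fin.val_mk] at this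
  omega

end Finset

namespace Pinnacle

open Finset

section PinnacleElements

variable {n k : ℕ} {P : Finset ℕ}

lemma pElem_eq_orderEmbOfFin (hk : P.card = k) {i : ℕ} (hi : 1 ≤ i) (hik : i ≤ k) :
    pElem n P i = P.orderEmbOfFin hk ⟨k - i, by omega⟩ := by
  subst hk
  rw [orderEmbOfFin_apply, pElem, if_neg (by omega), if_pos hik,
    List.getD_eq_getElem _ _ (by rw [length_sort]; omega)]
  rfl

lemma pElem_mem (hk : P.card = k) {i : ℕ} (hi : 1 ≤ i) (hik : i ≤ k) : pElem n P i ∈ P := by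
  rw [pElem_eq_orderEmbOfFin hk hi hik]
  exact orderEmbOfFin_mem P hk _

lemma pElem_lt_pElem (hP : P ⊆ Icc 1 n) (hk : P.card = k) {i j : ℕ}
    (hij : i < j) (hjk : j ≤ k) : pElem n P j < pElem n P i := by
  rcases Nat.eq_zero_or_pos i with rfl | hi
  · have := mem_Icc.mp (hP (pElem_mem (n := n) hk (by omega) hjk))
    rw [show pElem n P 0 = n + 1 from rfl]
    omega
  · rw [pElem_eq_orderEmbOfFin hk (by omega) hjk, pElem_eq_orderEmbOfFin hk hi (by omega)]
    exact (P.orderEmbOfFin hk).strictMono (Fin.mk_lt_mk.mpr (by omega))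

lemma pElem_le_pElem (hP : P ⊆ Icc 1 n) (hk : P.card = k) {i j : ℕ}
    (hij : i ≤ j) (hjk : j ≤ k) : pElem n P j ≤ pElem n P i := by
  rcases hij.eq_or_lt with rfl | hij
  · rfl
  · exact (pElem_lt_pElem hP hk hij hjk).le

lemma pElem_injOn (hP : P ⊆ Icc 1 n) (hk : P.card = k) :
    Set.InjOn (pElem n P) (Set.Icc 1 k) := by
  intro i hi j hj hij
  by_contra hne
  rcases Nat.lt_or_gt_of_ne hne with h | h
  · exact (pElem_lt_pElem hP hk h hj.2).ne' hij
  · exact (pElem_lt_pElem hP hk h hi.2).ne hij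

lemma nodup_map_pElem_range' (hP : P ⊆ Icc 1 n) (hk : P.card = k) :
    ((List.range' 1 k).map (pElem n P)).Nodup :=
  List.Nodup.map_on (fun x hx y hy h => pElem_injOn hP hk
    (by simpa [List.mem_range'_1, Nat.lt_succ_iff, add_comm] using hx)
    (by simpa [List.mem_range'_1, Nat.lt_succ_iff, add_comm] using hy) h) List.nodup_range'

lemma exists_pElem_eq (hk : P.card = k) {v : ℕ} (hv : v ∈ P) :
    ∃ i, 1 ≤ i ∧ i ≤ k ∧ pElem n P i = v := by
  rw [← mem_coe, ← range_orderEmbOfFin P hk] at hv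
  obtain ⟨m, rfl⟩ := hv
  refine ⟨k - m, by omega, by omega, ?_⟩
  rw [pElem_eq_orderEmbOfFin hk (by omega) (by omega)]
  congr 1
  exact Fin.ext (by simp only; omega)

lemma card_filter_lt_pElem (hk : P.card = k) {i : ℕ} (hi : 1 ≤ i) (hik : i ≤ k) :
    #{x ∈ P | x < pElem n P i} = k - i := by
  rw [pElem_eq_orderEmbOfFin hk hi hik, card_filter_lt_orderEmbOfFin]

def nonPinnaclesBelow (n : ℕ) (P : Finset ℕ) (v : ℕ) : Finset ℕ := {x ∈ Icc 1 n \ P | x < v}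

lemma card_nonPinnaclesBelow_pElem (hP : P ⊆ Icc 1 n) (hk : P.card = k) {i : ℕ}
    (hi : 1 ≤ i) (hik : i ≤ k) :
    #(nonPinnaclesBelow n P (pElem n P i)) + (k - i) + 1 = pElem n P i := by
  set v := pElem n P i
  have hv := mem_Icc.mp (hP (pElem_mem (n := n) hk hi hik))
  have hsplit : #{x ∈ Icc 1 n | x < v} = #(nonPinnaclesBelow n P v) + #{x ∈ P | x < v} := by
    rw [nonPinnaclesBelow, ← card_union_of_disjoint (disjoint_filter_filter sdiff_disjoint),
      ← filter_union, sdiff_union_of_subset hP]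
  have hIcc : #{x ∈ Icc 1 n | x < v} = v - 1 := by
    rw [← Ico_add_one_right_eq_Icc, Ico_filter_lt, Nat.card_Ico]
    omega
  rw [card_filter_lt_pElem hk hi hik] at hsplit
  omega

lemma mem_map_pElem_iff {s : List ℕ} (hk : P.card = k) (hs : s.Perm (List.range' 1 k))
    {v : ℕ} : v ∈ s.map (pElem n P) ↔ v ∈ P := by
  simp only [List.mem_map, hs.mem_iff, List.mem_range'_1]
  constructor
  · rintro ⟨i, hi, rfl⟩
    exact pElem_mem hk hi.1 (by omega)
  · intro hv
    obtain ⟨i, hi, hik, rfl⟩ := exists_pElem_eq (n := n) hk hv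
    exact ⟨i, ⟨hi, by omega⟩, rfl⟩

end PinnacleElements

section Slots

variable {k : ℕ} {s : List ℕ}

lemma length_eq_of_perm_range' (hs : s.Perm (List.range' 1 k)) : s.length = k := by
  simpa using hs.length_eq

lemma getD_mem_Icc_of_perm_range' (hs : s.Perm (List.range' 1 k)) {j : ℕ} (hj : j < k) :
    1 ≤ s.getD j 0 ∧ s.getD j 0 ≤ k := by
  have hmem : s.getD j 0 ∈ s := by
    rw [List.getD_eq_getElem _ _ (by rw [length_eq_of_perm_range' hs]; exact hj)]
    exact List.getElem_mem _
  have := List.mem_range'_1.mp (hs.mem_iff.mp hmem)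
  omega

lemma getD_le_of_perm_range' (hs : s.Perm (List.range' 1 k)) (j : ℕ) : s.getD j 0 ≤ k := by
  by_cases hj : j < k
  · exact (getD_mem_Icc_of_perm_range' hs hj).2
  · rw [List.getD_eq_default _ _ (by rw [length_eq_of_perm_range' hs]; omega)]
    omega

lemma card_filter_le_getD_of_perm_range' (hs : s.Perm (List.range' 1 k)) {i m : ℕ} (hi : 1 ≤ i)
    (hm : k ≤ m) : #{j ∈ range m | i ≤ s.getD j 0} = k + 1 - i := by
  rw [List.card_filter_range_getD s _ (by omega) (by rw [length_eq_of_perm_range' hs]; exact hm),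
    hs.countP_eq, List.countP_range'_le hi]

/-- Slot `j ≤ s.length` is the gap in front of entry `j` (0-based) of the ordering `s`;
`slotIndex s j` is the larger index of its two neighbouring pinnacles, i.e. that of the smaller
one, a missing neighbour having index `0` (standing for `p_0 = n + 1`). -/
def slotIndex (s : List ℕ) (j : ℕ) : ℕ := max ((0 :: s).getD j 0) (s.getD j 0)

def slotCount (s : List ℕ) (i : ℕ) : ℕ := #{j ∈ range (s.length + 1) | i ≤ slotIndex s j}

lemma slotIndex_le (hs : s.Perm (List.range' 1 k)) (j : ℕ) : slotIndex s j ≤ k := by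
  refine max_le ?_ (getD_le_of_perm_range' hs j)
  cases j with
  | zero => exact Nat.zero_le k
  | succ j => exact getD_le_of_perm_range' hs j

lemma one_le_slotIndex (hs : s.Perm (List.range' 1 k)) {j : ℕ} (hj : j ≤ k) (hk : 1 ≤ k) :
    1 ≤ slotIndex s j := by
  rcases hj.lt_or_eq with hj | hj
  · exact le_max_of_le_right (getD_mem_Icc_of_perm_range' hs hj).1
  · obtain ⟨j, rfl⟩ : ∃ j', j = j' + 1 := ⟨j - 1, by omega⟩
    refine le_max_of_le_left ?_
    rw [List.getD_cons_succ]
    exact (getD_mem_Icc_of_perm_range' hs (by omega)).1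

lemma slotCount_le_two_mul (hs : s.Perm (List.range' 1 k)) {i : ℕ} (hi : 1 ≤ i) :
    slotCount s i ≤ 2 * (k + 1 - i) := by
  have hl := length_eq_of_perm_range' hs
  have hleft : #{j ∈ range (k + 1) | i ≤ (0 :: s).getD j 0} = k + 1 - i := by
    rw [List.card_filter_range_getD _ _ (by omega) (by simp [hl]), List.countP_cons,
      hs.countP_eq, List.countP_range'_le hi]
    simp only [decide_eq_true_eq]
    split_ifs <;> omega
  calc slotCount s i
      = #({j ∈ range (k + 1) | i ≤ (0 :: s).getD j 0} ∪
          {j ∈ range (k + 1) | i ≤ s.getD j 0}) := by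
        simp only [slotCount, slotIndex, le_max_iff, filter_or, hl]
    _ ≤ 2 * (k + 1 - i) := by
        grw [card_union_le, hleft, card_filter_le_getD_of_perm_range' hs hi (by omega)]
        omega

lemma slotCount_le_min (hs : s.Perm (List.range' 1 k)) {i : ℕ} (hi : 1 ≤ i) :
    slotCount s i ≤ min (2 * (k + 1 - i)) (k + 1) :=
  le_min (slotCount_le_two_mul hs hi)
    ((card_filter_le _ _).trans (by rw [card_range, length_eq_of_perm_range' hs]))

lemma slotCount_one (hs : s.Perm (List.range' 1 k)) (hk : 1 ≤ k) : slotCount s 1 = k + 1 := by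
  rw [slotCount, filter_true_of_mem, card_range, length_eq_of_perm_range' hs]
  intro j hj
  exact one_le_slotIndex hs (by rw [mem_range, length_eq_of_perm_range' hs] at hj; omega) hk

lemma two_le_slotCount (hs : s.Perm (List.range' 1 k)) {i : ℕ} (hi : 1 ≤ i) (hik : i ≤ k) :
    2 ≤ slotCount s i := by
  obtain ⟨t, ht, hti⟩ :=
    List.getElem_of_mem (hs.mem_iff.mpr (List.mem_range'_1.mpr ⟨hi, by omega⟩))
  have hget : s.getD t 0 = i := by rw [List.getD_eq_getElem _ _ ht, hti]
  calc 2 = #{t, t + 1} := by simp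
    _ ≤ slotCount s i := by
      apply card_le_card
      intro j hj
      simp only [mem_insert, mem_singleton] at hj
      simp only [mem_filter, mem_range, slotIndex, le_max_iff]
      rcases hj with rfl | rfl
      · exact ⟨by omega, Or.inr hget.ge⟩
      · exact ⟨by omega, Or.inl (by rw [List.getD_cons_succ, hget])⟩

lemma exists_perm_min_le_slotCount {i : ℕ} (hi : 1 ≤ i) (hik : i ≤ k) :
    ∃ s : List ℕ, s.Perm (List.range' 1 k) ∧ min (2 * (k + 1 - i)) (k + 1) ≤ slotCount s i := by
  set a := k + 1 - i
  set b := i - 1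
  have hrange : ∀ t < a, (List.range' i a).getD t 0 = i + t := by
    intro t ht
    simp [List.getD_eq_getElem?_getD, ht]
  set s := (List.range' i a).interleave (List.range' 1 b)
  have hlen : s.length = k := by
    rw [List.length_interleave, List.length_range', List.length_range']
    omega
  -- the entries at positions `0, 2, …, 2b` and from `2b` on are `≥ i`, and slot `j` borders
  -- the entries at positions `j - 1` and `j`
  have hcover : ∀ j < min (2 * a) (k + 1), i ≤ slotIndex s j := by
    intro j hj
    rw [slotIndex, le_max_iff]
    by_cases hjb : j ≤ 2 * b + 1
    · obtain ⟨t, ht⟩ := Nat.even_or_odd' j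
      have heven : s.getD (2 * t) 0 = i + t := by
        rw [List.getD_interleave_two_mul _ (by simp; omega) (by simp; omega), hrange _ (by omega)]
      rcases ht with rfl | rfl
      · right
        omega
      · left
        rw [List.getD_cons_succ]
        omega
    · left
      obtain ⟨j, rfl⟩ : ∃ j', j = j' + 1 := ⟨j - 1, by omega⟩
      rw [List.getD_cons_succ, List.getD_interleave_of_le _ (by simp; omega),
        hrange _ (by simp; omega)]
      omega
  refine ⟨s, ?_, ?_⟩
  · refine List.interleave_perm_append.trans (List.perm_append_comm.trans ?_)
    rw [show i = 1 + b by omega, List.range'_append_1, show b + a = k by omega]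
  · calc min (2 * a) (k + 1) = #(range (min (2 * a) (k + 1))) := (card_range _).symm
      _ ≤ slotCount s i := card_le_card fun j hj => by
        rw [mem_range] at hj
        simp only [hlen, mem_filter, mem_range]
        exact ⟨by omega, hcover j hj⟩

end Slots

section PinnacleSet

lemma mem_pinnacleSet {l : List ℕ} {v : ℕ} :
    v ∈ pinnacleSet l ↔ ∃ r, 0 < r ∧ r + 1 < l.length ∧ l.getD (r - 1) 0 < l.getD r 0 ∧
      l.getD (r + 1) 0 < l.getD r 0 ∧ l.getD r 0 = v := by
  simp only [pinnacleSet, mem_image, mem_filter, mem_Ioo]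
  constructor
  · rintro ⟨r, ⟨⟨h0, hr⟩, h⟩, rfl⟩
    exact ⟨r, h0, by omega, h.1, h.2, rfl⟩
  · rintro ⟨r, h0, hr, h₁, h₂, rfl⟩
    exact ⟨r, ⟨⟨h0, by omega⟩, h₁, h₂⟩, rfl⟩

lemma pinnacleSet_cons_cons_cons (a b c : ℕ) (l : List ℕ) :
    pinnacleSet (a :: b :: c :: l) =
      (if a < b ∧ c < b then {b} else ∅) ∪ pinnacleSet (b :: c :: l) := by
  ext v
  simp only [mem_union, mem_pinnacleSet, List.length_cons]
  constructor
  · rintro ⟨r, h0, hr, h₁, h₂, rfl⟩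
    obtain ⟨r, rfl⟩ : ∃ r', r = r' + 1 := ⟨r - 1, by omega⟩
    rcases r with _ | r
    · left
      simp_all
    · right
      exact ⟨r + 1, by omega, by omega, by simpa using h₁, by simpa using h₂, by simp⟩
  · rintro (h | ⟨r, h0, hr, h₁, h₂, rfl⟩)
    · split_ifs at h with hab
      · rw [mem_singleton] at h
        exact ⟨1, by omega, by omega, by simpa using hab.1, by simpa using hab.2, by simp [h]⟩
      · simp at h
    · obtain ⟨r, rfl⟩ : ∃ r', r = r' + 1 := ⟨r - 1, by omega⟩
      exact ⟨r + 2, by omega, by omega, by simpa using h₁, by simpa using h₂, by simp⟩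

lemma pinnacleSet_cons_cons_of_lt {a b : ℕ} (hba : b < a) (l : List ℕ) :
    pinnacleSet (a :: b :: l) = pinnacleSet (b :: l) := by
  cases l with
  | nil => rfl
  | cons c l => rw [pinnacleSet_cons_cons_cons, if_neg (by omega), empty_union]

lemma pinnacleSet_append_of_pairwise_gt :
    ∀ {pre : List ℕ} (l : List ℕ), pre.Pairwise (· > ·) → (∀ a ∈ pre, ∀ b ∈ l.head?, b < a) →
      pinnacleSet (pre ++ l) = pinnacleSet l
  | [], _, _, _ => rfl
  | a :: pre, l, hpre, hhead => by
    rw [List.pairwise_cons] at hpre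
    rw [List.cons_append, ← pinnacleSet_append_of_pairwise_gt l hpre.2
      (fun a' ha' => hhead a' (List.mem_cons_of_mem a ha'))]
    rcases hc : pre ++ l with _ | ⟨b, rest⟩
    · rfl
    · refine pinnacleSet_cons_cons_of_lt ?_ rest
      cases pre with
      | nil => exact hhead a (List.mem_cons_self ..) b (by simp_all)
      | cons a' pre =>
        simp only [List.cons_append, List.cons.injEq] at hc
        exact hc.1 ▸ hpre.1 a' (List.mem_cons_self ..)

lemma pinnacleSet_interleave :
    ∀ {xs qs : List ℕ}, xs.length = qs.length + 1 →
      (∀ j < qs.length, xs.getD j 0 < qs.getD j 0 ∧ xs.getD (j + 1) 0 < qs.getD j 0) →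
      pinnacleSet (xs.interleave qs) = qs.toFinset
  | [_], [], _, _ => by rw [List.interleave_nil]; rfl
  | x :: x' :: xs, q :: qs, hlen, hzig => by
    have h0 := hzig 0 (by simp)
    simp only [List.getD_cons_zero, List.getD_cons_succ] at h0
    rw [List.cons_interleave, List.cons_interleave, List.cons_interleave,
      pinnacleSet_cons_cons_cons, if_pos h0, pinnacleSet_cons_cons_of_lt h0.2,
      ← List.cons_interleave, pinnacleSet_interleave (by simpa using hlen)
        (fun j hj => by simpa using hzig (j + 1) (by simpa using hj)),
      List.toFinset_cons, insert_eq]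

variable {l : List ℕ}

lemma getD_mem_pinnacleSet_iff (hl : l.Nodup) {r : ℕ} (hr : r < l.length) :
    l.getD r 0 ∈ pinnacleSet l ↔ 0 < r ∧ r + 1 < l.length ∧
      l.getD (r - 1) 0 < l.getD r 0 ∧ l.getD (r + 1) 0 < l.getD r 0 := by
  rw [mem_pinnacleSet]
  constructor
  · rintro ⟨r', h0, hr', h₁, h₂, he⟩
    rw [List.getD_eq_getElem _ _ (by omega), List.getD_eq_getElem _ _ hr,
      hl.getElem_inj_iff] at he
    subst he
    exact ⟨h0, hr', h₁, h₂⟩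
  · rintro ⟨h0, hr', h₁, h₂⟩
    exact ⟨r, h0, hr', h₁, h₂, rfl⟩

lemma getD_succ_notMem_pinnacleSet (hl : l.Nodup) {r : ℕ} (hr : r < l.length)
    (h : l.getD r 0 ∈ pinnacleSet l) : l.getD (r + 1) 0 ∉ pinnacleSet l := by
  rw [getD_mem_pinnacleSet_iff hl hr] at h
  rw [getD_mem_pinnacleSet_iff hl h.2.1, Nat.add_sub_cancel]
  omega

lemma getD_pred_notMem_pinnacleSet (hl : l.Nodup) {r : ℕ} (hr : r < l.length)
    (h : l.getD r 0 ∈ pinnacleSet l) : l.getD (r - 1) 0 ∉ pinnacleSet l := by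
  rw [getD_mem_pinnacleSet_iff hl hr] at h
  rw [getD_mem_pinnacleSet_iff hl (by omega), show r - 1 + 1 = r by omega]
  omega

end PinnacleSet

section Necessity

variable {l : List ℕ}

def pinnaclePositions (l : List ℕ) : List ℕ :=
  (List.range l.length).filter (fun r => l.getD r 0 ∈ pinnacleSet l)

def pinnaclePos (l : List ℕ) (j : ℕ) : ℕ := (pinnaclePositions l).getD j 0

lemma mem_pinnaclePositions {r : ℕ} :
    r ∈ pinnaclePositions l ↔ r < l.length ∧ l.getD r 0 ∈ pinnacleSet l := by
  simp [pinnaclePositions]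

lemma map_getD_pinnaclePositions (l : List ℕ) :
    (pinnaclePositions l).map (l.getD · 0) = l.filter (· ∈ pinnacleSet l) :=
  List.map_getD_filter_range l 0 (· ∈ pinnacleSet l)

lemma pinnaclePos_lt_length {j : ℕ} (hj : j < (pinnaclePositions l).length) :
    pinnaclePos l j < l.length := by
  rw [pinnaclePos, List.getD_eq_getElem _ _ hj]
  exact (mem_pinnaclePositions.mp (List.getElem_mem hj)).1

lemma getD_pinnaclePos_mem {j : ℕ} (hj : j < (pinnaclePositions l).length) :
    l.getD (pinnaclePos l j) 0 ∈ pinnacleSet l := by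
  rw [pinnaclePos, List.getD_eq_getElem _ _ hj]
  exact (mem_pinnaclePositions.mp (List.getElem_mem hj)).2

lemma pinnaclePos_lt_pinnaclePos {j j' : ℕ} (hjj' : j < j')
    (hj' : j' < (pinnaclePositions l).length) : pinnaclePos l j < pinnaclePos l j' := by
  have hsorted : (pinnaclePositions l).Pairwise (· < ·) :=
    List.pairwise_lt_range.sublist List.filter_sublist
  rw [pinnaclePos, pinnaclePos, List.getD_eq_getElem _ _ (by omega), List.getD_eq_getElem _ _ hj']
  exact List.pairwise_iff_getElem.mp hsorted _ _ _ _ hjj'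

lemma pinnaclePos_add_one_lt (hl : l.Nodup) {j : ℕ} (hj : j + 1 < (pinnaclePositions l).length) :
    pinnaclePos l j + 1 < pinnaclePos l (j + 1) := by
  refine lt_of_le_of_ne (pinnaclePos_lt_pinnaclePos (Nat.lt_succ_self j) hj) fun he => ?_
  exact getD_succ_notMem_pinnacleSet hl (pinnaclePos_lt_length (by omega))
    (getD_pinnaclePos_mem (by omega)) (he ▸ getD_pinnaclePos_mem hj)

def InSlot (l : List ℕ) (j r : ℕ) : Prop :=
  r < l.length ∧ (0 < j → pinnaclePos l (j - 1) < r) ∧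
    (j < (pinnaclePositions l).length → r < pinnaclePos l j)

lemma InSlot.eq {j j' r : ℕ} (h : InSlot l j r) (h' : InSlot l j' r)
    (hj : j ≤ (pinnaclePositions l).length) (hj' : j' ≤ (pinnaclePositions l).length) :
    j = j' := by
  by_contra hne
  wlog hlt : j < j' generalizing j j'
  · exact this h' h hj' hj (Ne.symm hne) (by omega)
  have hmono : pinnaclePos l j ≤ pinnaclePos l (j' - 1) := by
    rcases (show j ≤ j' - 1 by omega).lt_or_eq with h | h
    · exact (pinnaclePos_lt_pinnaclePos h (by omega)).le
    · rw [h]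
  have := h.2.2 (by omega)
  have := h'.2.1 (by omega)
  omega

lemma exists_inSlot_of_right (hl : l.Nodup) {j : ℕ} (hj : j < (pinnaclePositions l).length) :
    ∃ r, InSlot l j r ∧ l.getD r 0 ∉ pinnacleSet l ∧
      l.getD r 0 < l.getD (pinnaclePos l j) 0 := by
  have hlen := pinnaclePos_lt_length hj
  have hmem := getD_pinnaclePos_mem hj
  have hpin := (getD_mem_pinnacleSet_iff hl hlen).mp hmem
  refine ⟨pinnaclePos l j - 1, ⟨by omega, fun hj0 => ?_, fun _ => by omega⟩,
    getD_pred_notMem_pinnacleSet hl hlen hmem, hpin.2.2.1⟩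
  have := pinnaclePos_add_one_lt hl (j := j - 1) (by omega)
  rw [Nat.sub_add_cancel hj0] at this
  omega

lemma exists_inSlot_of_left (hl : l.Nodup) {j : ℕ} (hj : j < (pinnaclePositions l).length) :
    ∃ r, InSlot l (j + 1) r ∧ l.getD r 0 ∉ pinnacleSet l ∧
      l.getD r 0 < l.getD (pinnaclePos l j) 0 := by
  have hlen := pinnaclePos_lt_length hj
  have hmem := getD_pinnaclePos_mem hj
  have hpin := (getD_mem_pinnacleSet_iff hl hlen).mp hmem
  refine ⟨pinnaclePos l j + 1, ⟨hpin.2.1, fun _ => by simp, fun hj1 => ?_⟩,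
    getD_succ_notMem_pinnacleSet hl hlen hmem, hpin.2.2.2⟩
  exact pinnaclePos_add_one_lt hl hj1

lemma exists_inSlot_of_le_slotIndex {s : List ℕ} (hl : l.Nodup)
    (hlen : s.length = (pinnaclePositions l).length) {i j : ℕ} (hi : 1 ≤ i)
    (hij : i ≤ slotIndex s j) :
    ∃ t < s.length, i ≤ s.getD t 0 ∧ ∃ r, InSlot l j r ∧ l.getD r 0 ∉ pinnacleSet l ∧
      l.getD r 0 < l.getD (pinnaclePos l t) 0 := by
  rcases le_max_iff.mp hij with h | h
  · obtain ⟨t, rfl⟩ : ∃ t, j = t + 1 := ⟨j - 1, by cases j <;> simp_all⟩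
    rw [List.getD_cons_succ] at h
    have ht : t < s.length := by
      by_contra ht
      rw [List.getD_eq_default _ _ (by omega)] at h
      omega
    exact ⟨t, ht, h, exists_inSlot_of_left hl (by omega)⟩
  · have hj : j < s.length := by
      by_contra hj
      rw [List.getD_eq_default _ _ (by omega)] at h
      omega
    exact ⟨j, hj, h, exists_inSlot_of_right hl (by omega)⟩

lemma length_pinnaclePositions_of_filter_eq {s : List ℕ} {q : ℕ → ℕ}
    (hfil : l.filter (· ∈ pinnacleSet l) = s.map q) :
    (pinnaclePositions l).length = s.length := by
  simpa using congrArg List.length ((map_getD_pinnaclePositions l).trans hfil)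

lemma getD_pinnaclePos_of_filter_eq {s : List ℕ} {q : ℕ → ℕ}
    (hfil : l.filter (· ∈ pinnacleSet l) = s.map q) {t : ℕ} (ht : t < s.length) :
    l.getD (pinnaclePos l t) 0 = q (s.getD t 0) := by
  have hlen := length_pinnaclePositions_of_filter_eq hfil
  rw [pinnaclePos, List.getD_eq_getElem (pinnaclePositions l) 0 (by omega),
    List.getD_eq_getElem s 0 ht]
  simpa using List.getElem_of_eq ((map_getD_pinnaclePositions l).trans hfil) (by simp; omega)

variable {n k : ℕ} {P : Finset ℕ} {s : List ℕ}

theorem slotCount_le_of_isAdmissibleOrdering (hP : P ⊆ Icc 1 n) (hk : P.card = k)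
    (hs : s.Perm (List.range' 1 k)) (hadm : IsAdmissibleOrdering n P s) {i : ℕ} (hi : 1 ≤ i) :
    slotCount s i ≤ #(nonPinnaclesBelow n P (pElem n P i)) := by
  obtain ⟨l, hl, rfl, hfil⟩ := hadm
  rw [permsOf, List.mem_permutations] at hl
  rw [orderList] at hfil
  have hnd : l.Nodup := hl.nodup_iff.mpr List.nodup_range'
  have hTlen := length_pinnaclePositions_of_filter_eq hfil
  have key : ∀ j ∈ {j ∈ range (s.length + 1) | i ≤ slotIndex s j}, ∃ r, InSlot l j r ∧
      l.getD r 0 ∈ nonPinnaclesBelow n (pinnacleSet l) (pElem n (pinnacleSet l) i) := by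
    intro j hj
    obtain ⟨t, ht, hti, r, hr, hrP, hrlt⟩ :=
      exists_inSlot_of_le_slotIndex hnd hTlen.symm hi (mem_filter.mp hj).2
    have hrl : l.getD r 0 ∈ l := by
      rw [List.getD_eq_getElem _ _ hr.1]
      exact List.getElem_mem _
    have hrn := List.mem_range'_1.mp (hl.mem_iff.mp hrl)
    refine ⟨r, hr, mem_filter.mpr ⟨mem_sdiff.mpr ⟨mem_Icc.mpr ⟨hrn.1, by omega⟩, hrP⟩, ?_⟩⟩
    rw [getD_pinnaclePos_of_filter_eq hfil ht] at hrlt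
    exact hrlt.trans_le (pElem_le_pElem hP hk hti (getD_le_of_perm_range' hs t))
  choose! f hf using key
  refine card_le_card_of_injOn (fun j => l.getD (f j) 0) (fun j hj => (hf j hj).2) ?_
  intro j hj j' hj' he
  have hfj := (hf j hj).1
  have hfj' := (hf j' hj').1
  simp only [List.getD_eq_getElem _ _ hfj.1, List.getD_eq_getElem _ _ hfj'.1,
    hnd.getElem_inj_iff] at he
  simp only [coe_filter, mem_range, Set.mem_ofPred_eq] at hj hj'
  exact hfj.eq (he ▸ hfj') (by omega) (by omega)

end Necessity

section Sufficiency

variable {n k : ℕ} {P : Finset ℕ} {s : List ℕ}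

def slotKey (s : List ℕ) (j : ℕ) : ℕᵒᵈ ×ₗ ℕ := toLex (OrderDual.toDual (slotIndex s j), j)

/-- The slot of rank `r` will receive the `r`-th smallest non-pinnacle as its valley bottom. -/
def slotRank (s : List ℕ) (j : ℕ) : ℕ :=
  #{j' ∈ range (s.length + 1) | slotKey s j' < slotKey s j}

lemma slotRank_lt_slotCount {j : ℕ} (hj : j ≤ s.length) :
    slotRank s j < slotCount s (slotIndex s j) := by
  refine card_lt_card ⟨fun j' hj' => ?_, fun h => ?_⟩
  · simp only [mem_filter] at hj' ⊢
    exact ⟨hj'.1, OrderDual.toDual_le_toDual.mp (Prod.Lex.monotone_fst _ _ hj'.2.le)⟩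
  · exact lt_irrefl _ (mem_filter.mp (h (mem_filter.mpr ⟨mem_range.mpr (by omega), le_rfl⟩))).2

lemma slotRank_injOn : Set.InjOn (slotRank s) (range (s.length + 1)) :=
  injOn_card_filter_key_lt fun _ _ _ _ h => congrArg (fun x => (ofLex x).2) h

lemma map_slotRank_perm :
    ((List.range (s.length + 1)).map (slotRank s)).Perm (List.range (s.length + 1)) := by
  refine (List.subperm_of_subset (List.nodup_range.map_on fun x hx y hy h => ?_)
    fun r hr => ?_).perm_of_length_le (by simp)
  · exact slotRank_injOn (by simpa using hx) (by simpa using hy) h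
  · obtain ⟨j, hj, rfl⟩ := List.mem_map.mp hr
    exact List.mem_range.mpr (card_filter_key_lt_lt_card (by simpa using hj) |>.trans_le
      (card_range _).le)

def sortedNonPinnacles (n : ℕ) (P : Finset ℕ) : List ℕ := (Icc 1 n \ P).sort (· ≤ ·)

def valleyBottoms (X s : List ℕ) : List ℕ :=
  (List.range (s.length + 1)).map (fun j => X.getD (slotRank s j) 0)

/-- The large non-pinnacles in decreasing order, followed by the zigzag
`x₀ q₁ x₁ ⋯ q_k x_k` of valley bottoms `x_j` and pinnacles `q_j = p_{σ(j)}`. -/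
def canonicalPerm (n : ℕ) (P : Finset ℕ) (s : List ℕ) : List ℕ :=
  ((sortedNonPinnacles n P).drop (s.length + 1)).reverse ++
    (valleyBottoms (sortedNonPinnacles n P) s).interleave (s.map (pElem n P))

lemma length_sortedNonPinnacles (hP : P ⊆ Icc 1 n) (hk : P.card = k) :
    (sortedNonPinnacles n P).length = n - k := by
  rw [sortedNonPinnacles, length_sort, card_sdiff_of_subset hP, Nat.card_Icc, hk]
  omega

lemma notMem_of_mem_sortedNonPinnacles {x : ℕ} (hx : x ∈ sortedNonPinnacles n P) : x ∉ P :=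
  (mem_sdiff.mp ((mem_sort _).mp hx)).2

lemma sortedNonPinnacles_append_map_pElem_perm (hP : P ⊆ Icc 1 n) (hk : P.card = k) :
    (sortedNonPinnacles n P ++ (List.range' 1 k).map (pElem n P)).Perm (List.range' 1 n) := by
  have hmem := fun v => mem_map_pElem_iff (n := n) (v := v) hk (List.Perm.refl (List.range' 1 k))
  refine (List.perm_ext_iff_of_nodup ?_ List.nodup_range').mpr fun v => ?_
  · refine List.nodup_append.mpr ⟨sort_nodup _ _, nodup_map_pElem_range' hP hk,
      fun a ha b hb hab => ?_⟩
    exact notMem_of_mem_sortedNonPinnacles ha ((hmem _).mp (hab ▸ hb))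
  · have hPv : v ∈ P → 1 ≤ v ∧ v ≤ n := fun h => mem_Icc.mp (hP h)
    rw [List.mem_append, sortedNonPinnacles, mem_sort, hmem, mem_sdiff, List.mem_range'_1,
      mem_Icc]
    by_cases hv : v ∈ P
    · simp only [hv, true_iff, or_true]
      have := hPv hv
      omega
    · simp only [hv, not_false_eq_true, and_true, or_false]
      omega

lemma valleyBottoms_perm {X : List ℕ} (hX : s.length + 1 ≤ X.length) :
    (valleyBottoms X s).Perm (X.take (s.length + 1)) := by
  rw [valleyBottoms, ← List.map_getD_range_eq_take X 0 hX]
  simpa only [List.map_map, Function.comp_def] using map_slotRank_perm.map (X.getD · 0)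

lemma getD_valleyBottoms (X : List ℕ) {j : ℕ} (hj : j ≤ s.length) :
    (valleyBottoms X s).getD j 0 = X.getD (slotRank s j) 0 := by
  simp [valleyBottoms, List.getD_eq_getElem?_getD, Nat.lt_succ_of_le hj]

lemma canonicalPerm_perm (hP : P ⊆ Icc 1 n) (hk : P.card = k) (hs : s.Perm (List.range' 1 k))
    (hn : 2 * k + 1 ≤ n) : (canonicalPerm n P s).Perm (List.range' 1 n) := by
  set X := sortedNonPinnacles n P
  have hX : s.length + 1 ≤ X.length := by
    rw [length_sortedNonPinnacles hP hk, length_eq_of_perm_range' hs]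
    omega
  refine ((List.reverse_perm _).append (List.interleave_perm_append.trans
    ((valleyBottoms_perm hX).append_right _))).trans ?_
  rw [← List.append_assoc]
  refine (List.perm_append_comm.append_right _).trans ?_
  rw [List.take_append_drop]
  exact ((hs.map _).append_left _).trans (sortedNonPinnacles_append_map_pElem_perm hP hk)

lemma getD_map_pElem (hs : s.Perm (List.range' 1 k)) {j : ℕ} (hj : j < k) :
    (s.map (pElem n P)).getD j 0 = pElem n P (s.getD j 0) := by
  have hslen := length_eq_of_perm_range' hs
  rw [List.getD_eq_getElem _ _ (by simp; omega), List.getElem_map,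
    List.getD_eq_getElem _ _ (by omega)]

lemma getD_valleyBottoms_lt (hs : s.Perm (List.range' 1 k)) (hk1 : 1 ≤ k)
    (h : ∀ i, 1 ≤ i → i ≤ k → slotCount s i ≤ #(nonPinnaclesBelow n P (pElem n P i)))
    {j : ℕ} (hj : j ≤ k) :
    (valleyBottoms (sortedNonPinnacles n P) s).getD j 0 < pElem n P (slotIndex s j) := by
  have hj' : j ≤ s.length := by rw [length_eq_of_perm_range' hs]; exact hj
  rw [getD_valleyBottoms _ hj']
  exact getD_sort_lt _ _ ((slotRank_lt_slotCount hj').trans_le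
    (h _ (one_le_slotIndex hs hj hk1) (slotIndex_le hs j)))

lemma pinnacleSet_canonicalPerm (hP : P ⊆ Icc 1 n) (hk : P.card = k)
    (hs : s.Perm (List.range' 1 k)) (hk1 : 1 ≤ k) (hn : 2 * k + 1 ≤ n)
    (h : ∀ i, 1 ≤ i → i ≤ k → slotCount s i ≤ #(nonPinnaclesBelow n P (pElem n P i))) :
    pinnacleSet (canonicalPerm n P s) = P := by
  set X := sortedNonPinnacles n P
  have hslen := length_eq_of_perm_range' hs
  have hxs := valleyBottoms_perm (X := X) (s := s)
    (by rw [length_sortedNonPinnacles hP hk]; omega)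
  have hX : X.Pairwise (· < ·) := (sortedLT_sort _).pairwise
  obtain ⟨x₀, xs, hx₀⟩ : ∃ x₀ xs, valleyBottoms X s = x₀ :: xs :=
    ⟨_, _, (List.cons_head_tail (by simp [valleyBottoms])).symm⟩
  have hpre : ∀ a ∈ (X.drop (s.length + 1)).reverse,
      ∀ b ∈ ((valleyBottoms X s).interleave (s.map (pElem n P))).head?, b < a := by
    intro a ha b hb
    rw [hx₀, List.cons_interleave, List.head?_cons, Option.mem_some_iff] at hb
    subst hb
    rw [← List.take_append_drop (s.length + 1) X, List.pairwise_append] at hX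
    exact hX.2.2 _ (hxs.mem_iff.mp (hx₀ ▸ List.mem_cons_self ..)) a (List.mem_reverse.mp ha)
  have hzig : ∀ j < (s.map (pElem n P)).length,
      (valleyBottoms X s).getD j 0 < (s.map (pElem n P)).getD j 0 ∧
        (valleyBottoms X s).getD (j + 1) 0 < (s.map (pElem n P)).getD j 0 := by
    intro j hj
    rw [List.length_map] at hj
    rw [getD_map_pElem hs (by omega)]
    refine ⟨(getD_valleyBottoms_lt hs hk1 h (by omega)).trans_le
        (pElem_le_pElem hP hk (le_max_right _ _) (slotIndex_le hs j)),
      (getD_valleyBottoms_lt hs hk1 h (by omega)).trans_le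
        (pElem_le_pElem hP hk ?_ (slotIndex_le hs (j + 1)))⟩
    exact (List.getD_cons_succ (x := 0)).symm.le.trans (le_max_left _ _)
  rw [canonicalPerm, pinnacleSet_append_of_pairwise_gt _
      (List.pairwise_reverse.mpr (hX.sublist (List.drop_sublist _ _))) hpre,
    pinnacleSet_interleave (by simp [valleyBottoms]) hzig]
  ext v
  rw [List.mem_toFinset, mem_map_pElem_iff hk hs]

lemma filter_canonicalPerm (hP : P ⊆ Icc 1 n) (hk : P.card = k)
    (hs : s.Perm (List.range' 1 k)) (hn : 2 * k + 1 ≤ n) :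
    (canonicalPerm n P s).filter (· ∈ P) = orderList n P s := by
  have hslen := length_eq_of_perm_range' hs
  have hxs := valleyBottoms_perm (X := sortedNonPinnacles n P) (s := s)
    (by rw [length_sortedNonPinnacles hP hk]; omega)
  rw [canonicalPerm, List.filter_append, List.filter_eq_nil_iff.mpr, List.nil_append,
    List.filter_interleave_of_forall, orderList]
  · intro a ha
    simpa using notMem_of_mem_sortedNonPinnacles (List.mem_of_mem_take (hxs.mem_iff.mp ha))
  · intro b hb
    simpa using (mem_map_pElem_iff hk hs).mp hb
  · intro a ha
    simpa using notMem_of_mem_sortedNonPinnacles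
      (List.mem_of_mem_drop (List.mem_reverse.mp ha))

theorem isAdmissibleOrdering_of_slotCount_le (hP : P ⊆ Icc 1 n) (hk : P.card = k)
    (hs : s.Perm (List.range' 1 k)) (hk1 : 1 ≤ k)
    (h : ∀ i, 1 ≤ i → i ≤ k → slotCount s i ≤ #(nonPinnaclesBelow n P (pElem n P i))) :
    IsAdmissibleOrdering n P s := by
  have hn : 2 * k + 1 ≤ n := by
    have h1 := h 1 le_rfl hk1
    have hcard : #(nonPinnaclesBelow n P (pElem n P 1)) ≤ n - k :=
      (card_filter_le _ _).trans (by rw [card_sdiff_of_subset hP, Nat.card_Icc, hk]; omega)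
    rw [slotCount_one hs hk1] at h1
    omega
  exact ⟨canonicalPerm n P s, List.mem_permutations.mpr (canonicalPerm_perm hP hk hs hn),
    pinnacleSet_canonicalPerm hP hk hs hk1 hn h, filter_canonicalPerm hP hk hs hn⟩

end Sufficiency

variable {n k : ℕ} {P : Finset ℕ}

theorem isAdmissibleOrdering_iff {s : List ℕ} (hP : P ⊆ Icc 1 n) (hk : P.card = k)
    (hs : s.Perm (List.range' 1 k)) (hk1 : 1 ≤ k) :
    IsAdmissibleOrdering n P s ↔
      ∀ i, 1 ≤ i → i ≤ k → slotCount s i ≤ #(nonPinnaclesBelow n P (pElem n P i)) :=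
  ⟨fun hadm _ hi _ => slotCount_le_of_isAdmissibleOrdering hP hk hs hadm hi,
    isAdmissibleOrdering_of_slotCount_le hP hk hs hk1⟩

theorem exists_isAdmissibleOrdering (hP : P ⊆ Icc 1 n) (hk : P.card = k) (hne : Snp n P ≠ 0) :
    ∃ s : List ℕ, s.Perm (List.range' 1 k) ∧ IsAdmissibleOrdering n P s := by
  obtain ⟨l, hl, hpin⟩ := List.countP_pos_iff.mp (Nat.pos_of_ne_zero hne)
  rw [decide_eq_true_eq] at hpin
  have hlperm := List.mem_permutations.mp hl
  have hnd : l.Nodup := hlperm.nodup_iff.mpr List.nodup_range'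
  have hperm : (l.filter (· ∈ P)).Perm ((List.range' 1 k).map (pElem n P)) := by
    refine (List.perm_ext_iff_of_nodup (hnd.sublist List.filter_sublist)
      (nodup_map_pElem_range' hP hk)).mpr fun v => ?_
    rw [mem_map_pElem_iff hk (List.Perm.refl _), List.mem_filter, decide_eq_true_eq,
      hlperm.mem_iff, List.mem_range'_1, and_iff_right_iff_imp]
    intro hv
    have := mem_Icc.mp (hP hv)
    omega
  obtain ⟨s, hfs, hs⟩ : Relation.Comp (· = ·.map (pElem n P)) List.Perm
      (l.filter (· ∈ P)) (List.range' 1 k) := by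
    rw [List.eq_map_comp_perm]
    exact hperm
  exact ⟨s, hs, l, hl, hpin, hfs⟩

end Pinnacle

open Pinnacle

/-- Corollary 4.6 of Rusu–Tenner: a pinnacle set `P` with
`S_n(P) ≠ ∅` is maximally admissible iff `p_i ≥ min(2k − i + 2, 3(k+1−i))` for all
`2 ≤ i ≤ k−1`. -/
theorem statement18 (n k : ℕ) (P : Finset ℕ) (hP : P ⊆ Finset.Icc 1 n)
    (hk : P.card = k) (hne : Snp n P ≠ 0) :
    ((∀ s : List ℕ, s.Perm (List.range' 1 k) → IsAdmissibleOrdering n P s) ↔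
      (∀ i, 2 ≤ i → i ≤ k - 1 →
        min (2*k - i + 2) (3*(k + 1 - i)) ≤ pElem n P i)) := by
  obtain ⟨s₀, hs₀, hadm₀⟩ := exists_isAdmissibleOrdering hP hk hne
  rcases Nat.eq_zero_or_pos k with rfl | hk1
  · refine ⟨fun _ i _ _ => by omega, fun _ s hs => ?_⟩
    rwa [hs.eq_nil, ← hs₀.eq_nil]
  have hbelow := fun i (hi : 1 ≤ i) (hik : i ≤ k) => card_nonPinnaclesBelow_pElem hP hk hi hik
  have h₀ := (isAdmissibleOrdering_iff hP hk hs₀ hk1).mp hadm₀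
  constructor
  · intro hall i hi hik
    obtain ⟨s, hs, hge⟩ := exists_perm_min_le_slotCount (by omega : 1 ≤ i) (by omega : i ≤ k)
    have := (isAdmissibleOrdering_iff hP hk hs hk1).mp (hall s hs) i (by omega) (by omega)
    have := hbelow i (by omega) (by omega)
    omega
  · intro hmin s hs
    refine (isAdmissibleOrdering_iff hP hk hs hk1).mpr fun i hi hik =>
      (slotCount_le_min hs hi).trans ?_
    rcases (show i = 1 ∨ i = k ∨ (2 ≤ i ∧ i ≤ k - 1) by omega) with rfl | rfl | ⟨hi2, hik1⟩
    · have := h₀ 1 le_rfl hk1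
      rw [slotCount_one hs₀ hk1] at this
      omega
    · have := two_le_slotCount hs₀ hi hik
      have := h₀ i hi hik
      omega
    · have := hmin i hi2 hik1
      have := hbelow i hi hik
      omega
end
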